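/- arXiv:1806.08670 — 6 statements merged into one kernel-verified Lean document; each statement's English description precedes it below -/
import Mathlib

section
/- Let (A₁, A₂; H, Φ, ℂⁿ; σ₁, σ₂, γ, γ̃) be a commutative two-operator vessel. Then for all λ₁, λ₂ ∈ ℂ, det(λ₁ σ₂ − λ₂ σ₁ + γ) = det(λ₁ σ₂ − λ₂ σ₁ + γ̃); that is, the input and output determinantal representations define the same discriminant polynomial. -/
open ContinuousLinearMap

/-- A complex `n × n` matrix acting as a continuous linear operator on `ℂⁿ`
(with its standard inner product). -/
noncomputable def matCLM {n : ℕ} (A : Matrix (Fin n) (Fin n) ℂ) :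
    EuclideanSpace ℂ (Fin n) →L[ℂ] EuclideanSpace ℂ (Fin n) :=
  Matrix.toEuclideanCLM (𝕜 := ℂ) A

namespace VesselAux

variable {n : ℕ}

lemma matCLM_add (A B : Matrix (Fin n) (Fin n) ℂ) :
    matCLM (A + B) = matCLM A + matCLM B := map_add _ _ _

lemma matCLM_sub (A B : Matrix (Fin n) (Fin n) ℂ) :
    matCLM (A - B) = matCLM A - matCLM B := map_sub _ _ _

lemma matCLM_smul (c : ℂ) (A : Matrix (Fin n) (Fin n) ℂ) :
    matCLM (c • A) = c • matCLM A := map_smul _ _ _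

lemma matCLM_mul (A B : Matrix (Fin n) (Fin n) ℂ) :
    matCLM (A * B) = matCLM A ∘L matCLM B := map_mul _ _ _

lemma matCLM_one : matCLM (1 : Matrix (Fin n) (Fin n) ℂ) = 1 := map_one _

lemma matCLM_inj {A B : Matrix (Fin n) (Fin n) ℂ} (h : matCLM A = matCLM B) : A = B :=
  (Matrix.toEuclideanCLM (𝕜 := ℂ) (n := Fin n)).injective h

/-- inverse of `matCLM`. -/
noncomputable def matInv (T : EuclideanSpace ℂ (Fin n) →L[ℂ] EuclideanSpace ℂ (Fin n)) :
    Matrix (Fin n) (Fin n) ℂ :=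
  (Matrix.toEuclideanCLM (𝕜 := ℂ) (n := Fin n)).symm T

lemma matCLM_matInv (T : EuclideanSpace ℂ (Fin n) →L[ℂ] EuclideanSpace ℂ (Fin n)) :
    matCLM (matInv T) = T :=
  (Matrix.toEuclideanCLM (𝕜 := ℂ) (n := Fin n)).apply_symm_apply T

lemma matCLM_adjoint {A : Matrix (Fin n) (Fin n) ℂ} (hA : A.IsHermitian) :
    ContinuousLinearMap.adjoint (matCLM A) = matCLM A := by
  rw [← ContinuousLinearMap.star_eq_adjoint]
  show star ((Matrix.toEuclideanCLM (𝕜 := ℂ)) A) = _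
  rw [← map_star, Matrix.star_eq_conjTranspose, hA]
  rfl

-- key algebra step at matrix level
lemma matrix_key (B γ γ' σ₁ σ₂ K K₂ P : Matrix (Fin n) (Fin n) ℂ)
    (eq1 : (B + γ') * K = σ₁ * K₂ - σ₂ * P)
    (eq2 : K * (B + γ) = K₂ * σ₁ - P * σ₂)
    (eqlink : γ' - γ = Complex.I • (σ₁ * P * σ₂ - σ₂ * P * σ₁)) :
    (B + γ') * (1 - Complex.I • (K * σ₁)) = (1 - Complex.I • (σ₁ * K)) * (B + γ) := by
  have h1 : (B + γ') * (K * σ₁) = (σ₁ * K₂ - σ₂ * P) * σ₁ := by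
    rw [← mul_assoc, eq1]
  have h2 : (σ₁ * K) * (B + γ) = σ₁ * (K₂ * σ₁ - P * σ₂) := by
    rw [mul_assoc, eq2]
  have h3 : γ' = γ + Complex.I • (σ₁ * P * σ₂ - σ₂ * P * σ₁) := by
    rw [← eqlink]; abel
  rw [mul_sub, sub_mul, mul_one, one_mul, mul_smul_comm, smul_mul_assoc, h1, h2, h3]
  simp only [mul_sub, sub_mul, mul_add, add_mul, smul_sub, mul_assoc]
  module

end VesselAux

open VesselAux

set_option maxHeartbeats 1000000

/-- **Equality of the input and output discriminant polynomials of a commutative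
two-operator vessel** `(A₁, A₂; H, Φ, ℂⁿ; σ₁, σ₂, γ, γ̃)`:
`det(λ₁σ₂ − λ₂σ₁ + γ) = det(λ₁σ₂ − λ₂σ₁ + γ̃)` for all `λ₁, λ₂ ∈ ℂ`. -/
theorem vessel_discriminant_polynomials_agree
    (n : ℕ)
    (H : Type*) [NormedAddCommGroup H] [InnerProductSpace ℂ H] [CompleteSpace H]
    (A₁ A₂ : H →L[ℂ] H) (hcomm : A₁ * A₂ = A₂ * A₁)
    (Φ : H →L[ℂ] EuclideanSpace ℂ (Fin n))
    (σ₁ σ₂ γ γ' : Matrix (Fin n) (Fin n) ℂ)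
    (hσ₁ : σ₁.IsHermitian) (hσ₂ : σ₂.IsHermitian)
    (hγ : γ.IsHermitian) (hγ' : γ'.IsHermitian)
    (hcol₁ : Complex.I⁻¹ • (A₁ - ContinuousLinearMap.adjoint A₁)
        = ContinuousLinearMap.adjoint Φ ∘L matCLM σ₁ ∘L Φ)
    (hcol₂ : Complex.I⁻¹ • (A₂ - ContinuousLinearMap.adjoint A₂)
        = ContinuousLinearMap.adjoint Φ ∘L matCLM σ₂ ∘L Φ)
    (hin : matCLM σ₁ ∘L Φ ∘L ContinuousLinearMap.adjoint A₂
          - matCLM σ₂ ∘L Φ ∘L ContinuousLinearMap.adjoint A₁ = matCLM γ ∘L Φ)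
    (hout : matCLM σ₁ ∘L Φ ∘L A₂ - matCLM σ₂ ∘L Φ ∘L A₁ = matCLM γ' ∘L Φ)
    (hlink : Complex.I • (matCLM σ₁ ∘L Φ ∘L ContinuousLinearMap.adjoint Φ ∘L matCLM σ₂
          - matCLM σ₂ ∘L Φ ∘L ContinuousLinearMap.adjoint Φ ∘L matCLM σ₁)
        = matCLM γ' - matCLM γ) :
    ∀ l₁ l₂ : ℂ,
      (l₁ • σ₂ - l₂ • σ₁ + γ).det = (l₁ • σ₂ - l₂ • σ₁ + γ').det := by
  set C : ℝ := 1 + 2 * ‖A₁‖ + 2 * ‖Φ‖ * ‖Φ‖ * ‖matCLM σ₁‖ with hC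
  have hC0 : 0 < C := by positivity
  have key : ∀ l₁ l₂ : ℂ, C < ‖l₁‖ →
      (l₁ • σ₂ - l₂ • σ₁ + γ).det = (l₁ • σ₂ - l₂ • σ₁ + γ').det := by
    intro l₁ l₂ hl
    have ha : (0:ℝ) ≤ 2 * ‖A₁‖ := by positivity
    have hb : (0:ℝ) ≤ 2 * ‖Φ‖ * ‖Φ‖ * ‖matCLM σ₁‖ := by positivity
    have hl1 : (1:ℝ) < ‖l₁‖ := by rw [hC] at hl; linarith
    have hl0 : l₁ ≠ 0 := by
      intro h; rw [h, norm_zero] at hl1; linarith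
    have hln0 : -l₁ ≠ 0 := neg_ne_zero.2 hl0
    set t : H →L[ℂ] H := l₁⁻¹ • A₁ with ht
    have hlA : 2 * ‖A₁‖ < ‖l₁‖ := by rw [hC] at hl; linarith
    have htn : ‖t‖ ≤ 1/2 := by
      rw [ht, norm_smul, norm_inv, ← div_eq_inv_mul,
        div_le_iff₀ (by linarith : (0:ℝ) < ‖l₁‖)]
      linarith
    have htn1 : ‖t‖ < 1 := lt_of_le_of_lt htn (by norm_num)
    set w : (H →L[ℂ] H)ˣ := Units.oneSub t htn1 with hw
    have hwval : (w : H →L[ℂ] H) = 1 - t := rfl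
    set R : H →L[ℂ] H := (-l₁)⁻¹ • (↑w⁻¹ : H →L[ℂ] H) with hR
    set u : H →L[ℂ] H := A₁ - l₁ • 1 with hu
    have hfact : (-l₁) * l₁⁻¹ = -1 := by field_simp
    have huw : u = (-l₁) • (w : H →L[ℂ] H) := by
      rw [hwval, ht, hu, smul_sub, smul_smul, hfact, neg_one_smul, sub_neg_eq_add, neg_smul]
      abel
    have hRu : R * u = 1 := by
      rw [hR, huw, smul_mul_assoc, mul_smul_comm, smul_smul, inv_mul_cancel₀ hln0,
        one_smul, Units.inv_mul]
    have huR : u * R = 1 := by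
      rw [hR, huw, smul_mul_assoc, mul_smul_comm, smul_smul, mul_inv_cancel₀ hln0,
        one_smul, Units.mul_inv]
    -- norm bound on R
    have hwinv : (↑w⁻¹ : H →L[ℂ] H) = 1 + t * ↑w⁻¹ := by
      have h : (1 - t) * ↑w⁻¹ = 1 := by rw [← hwval]; exact w.mul_inv
      rw [sub_mul, one_mul, sub_eq_iff_eq_add] at h
      exact h
    have hwn : ‖(↑w⁻¹ : H →L[ℂ] H)‖ ≤ 2 := by
      have h1 : ‖(↑w⁻¹ : H →L[ℂ] H)‖ ≤ 1 + ‖t‖ * ‖(↑w⁻¹ : H →L[ℂ] H)‖ := by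
        calc ‖(↑w⁻¹ : H →L[ℂ] H)‖ = ‖1 + t * ↑w⁻¹‖ := by rw [← hwinv]
          _ ≤ ‖(1 : H →L[ℂ] H)‖ + ‖t * ↑w⁻¹‖ := norm_add_le _ _
          _ ≤ 1 + ‖t‖ * ‖(↑w⁻¹ : H →L[ℂ] H)‖ := by
              gcongr
              · rw [ContinuousLinearMap.one_def]; exact ContinuousLinearMap.norm_id_le
              · exact norm_mul_le _ _
      have h2 := mul_le_mul_of_nonneg_right htn (norm_nonneg (↑w⁻¹ : H →L[ℂ] H))
      linarith
    have hRn : ‖R‖ ≤ 2 / ‖l₁‖ := by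
      rw [hR, norm_smul, norm_inv, norm_neg, ← div_eq_inv_mul]
      rw [div_le_div_iff₀ (by linarith : (0:ℝ) < ‖l₁‖) (by linarith : (0:ℝ) < ‖l₁‖)]
      exact mul_le_mul_of_nonneg_right hwn (norm_nonneg _)
    -- operator-level consequences of the vessel conditions
    set Φs := ContinuousLinearMap.adjoint Φ with hΦs
    set v : H →L[ℂ] H := A₂ - l₂ • 1 with hv
    have huv : u * v = v * u := by
      rw [hu, hv]
      simp only [sub_mul, mul_sub, smul_mul_assoc, mul_smul_comm, one_mul, mul_one, hcomm]
      module
    have hRv : R * v = v * R := by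
      calc R * v = R * v * (u * R) := by rw [huR, mul_one]
        _ = R * (v * u) * R := by simp only [mul_assoc]
        _ = R * (u * v) * R := by rw [huv]
        _ = R * u * (v * R) := by simp only [mul_assoc]
        _ = v * R := by rw [hRu, one_mul]
    have hΦv : Φ ∘L v = Φ ∘L A₂ - l₂ • Φ := by
      rw [hv, comp_sub, comp_smul, ContinuousLinearMap.one_def, comp_id]
    have hΦu : Φ ∘L u = Φ ∘L A₁ - l₁ • Φ := by
      rw [hu, comp_sub, comp_smul, ContinuousLinearMap.one_def, comp_id]
    have hvΦ : v ∘L Φs = A₂ ∘L Φs - l₂ • Φs := by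
      rw [hv, sub_comp, smul_comp, ContinuousLinearMap.one_def, id_comp]
    have huΦ : u ∘L Φs = A₁ ∘L Φs - l₁ • Φs := by
      rw [hu, sub_comp, smul_comp, ContinuousLinearMap.one_def, id_comp]
    have hG1 : matCLM (l₁ • σ₂ - l₂ • σ₁ + γ') ∘L Φ
        = matCLM σ₁ ∘L (Φ ∘L v) - matCLM σ₂ ∘L (Φ ∘L u) := by
      rw [matCLM_add, matCLM_sub, matCLM_smul, matCLM_smul, add_comp, sub_comp,
        smul_comp, smul_comp, ← hout, hΦv, hΦu, comp_sub, comp_sub, comp_smul, comp_smul]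
      abel
    have hin' : A₂ ∘L (Φs ∘L matCLM σ₁) - A₁ ∘L (Φs ∘L matCLM σ₂) = Φs ∘L matCLM γ := by
      have h := congrArg ContinuousLinearMap.adjoint hin
      simp only [map_sub, ContinuousLinearMap.adjoint_comp, ContinuousLinearMap.adjoint_adjoint,
        matCLM_adjoint hσ₁, matCLM_adjoint hσ₂, matCLM_adjoint hγ] at h
      rw [← hΦs] at h
      rw [← comp_assoc, ← comp_assoc, h]
    have hG2 : Φs ∘L matCLM (l₁ • σ₂ - l₂ • σ₁ + γ)
        = v ∘L (Φs ∘L matCLM σ₁) - u ∘L (Φs ∘L matCLM σ₂) := by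
      rw [matCLM_add, matCLM_sub, matCLM_smul, matCLM_smul, comp_add, comp_sub,
        comp_smul, comp_smul, ← hin', ← comp_assoc v Φs (matCLM σ₁),
        ← comp_assoc u Φs (matCLM σ₂), hvΦ, huΦ, sub_comp, sub_comp, smul_comp, smul_comp,
        comp_assoc, comp_assoc]
      abel
    -- matrices K, K₂, P
    set K := matInv (Φ ∘L (R ∘L Φs)) with hK
    set K₂ := matInv (Φ ∘L ((R * v) ∘L Φs)) with hK₂
    set P := matInv (Φ ∘L Φs) with hP
    set B : Matrix (Fin n) (Fin n) ℂ := l₁ • σ₂ - l₂ • σ₁ with hB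
    have hmul : ∀ (a b : H →L[ℂ] H), a ∘L b = a * b := fun _ _ => rfl
    have eq1 : (B + γ') * K = σ₁ * K₂ - σ₂ * P := by
      apply matCLM_inj
      rw [matCLM_mul, matCLM_sub, matCLM_mul, matCLM_mul, hK, hK₂, hP,
        matCLM_matInv, matCLM_matInv, matCLM_matInv]
      calc matCLM (B + γ') ∘L (Φ ∘L (R ∘L Φs))
          = (matCLM (B + γ') ∘L Φ) ∘L (R ∘L Φs) := by rw [comp_assoc]
        _ = (matCLM σ₁ ∘L (Φ ∘L v) - matCLM σ₂ ∘L (Φ ∘L u)) ∘L (R ∘L Φs) := by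
            rw [hB, hG1]
        _ = matCLM σ₁ ∘L (Φ ∘L ((v * R) ∘L Φs)) - matCLM σ₂ ∘L (Φ ∘L ((u * R) ∘L Φs)) := by
            rw [sub_comp, comp_assoc, comp_assoc, comp_assoc, comp_assoc,
              ← comp_assoc v R Φs, ← comp_assoc u R Φs, hmul, hmul]
        _ = matCLM σ₁ ∘L (Φ ∘L ((R * v) ∘L Φs)) - matCLM σ₂ ∘L (Φ ∘L Φs) := by
            rw [← hRv, huR, ContinuousLinearMap.one_def, id_comp]
    have eq2 : K * (B + γ) = K₂ * σ₁ - P * σ₂ := by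
      apply matCLM_inj
      rw [matCLM_mul, matCLM_sub, matCLM_mul, matCLM_mul, hK, hK₂, hP,
        matCLM_matInv, matCLM_matInv, matCLM_matInv]
      calc (Φ ∘L (R ∘L Φs)) ∘L matCLM (B + γ)
          = Φ ∘L (R ∘L (Φs ∘L matCLM (B + γ))) := by rw [comp_assoc, comp_assoc]
        _ = Φ ∘L (R ∘L (v ∘L (Φs ∘L matCLM σ₁) - u ∘L (Φs ∘L matCLM σ₂))) := by
            rw [hB, hG2]
        _ = Φ ∘L ((R * v) ∘L (Φs ∘L matCLM σ₁)) - Φ ∘L ((R * u) ∘L (Φs ∘L matCLM σ₂)) := by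
            rw [comp_sub, comp_sub, ← comp_assoc R v _, ← comp_assoc R u _, hmul, hmul]
        _ = (Φ ∘L ((R * v) ∘L Φs)) ∘L matCLM σ₁ - (Φ ∘L Φs) ∘L matCLM σ₂ := by
            rw [hRu, ContinuousLinearMap.one_def, id_comp]
            simp only [comp_assoc]
    have eqlink : γ' - γ = Complex.I • (σ₁ * P * σ₂ - σ₂ * P * σ₁) := by
      apply matCLM_inj
      rw [matCLM_sub, matCLM_smul, matCLM_sub, matCLM_mul, matCLM_mul, matCLM_mul,
        matCLM_mul, hP, matCLM_matInv, ← hlink]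
      simp only [comp_assoc]
    have hstar := matrix_key B γ γ' σ₁ σ₂ K K₂ P eq1 eq2 eqlink
    -- determinant step
    have hdet := congrArg Matrix.det hstar
    rw [Matrix.det_mul, Matrix.det_mul] at hdet
    have hdeq : (1 - Complex.I • (K * σ₁)).det = (1 - Complex.I • (σ₁ * K)).det := by
      have h1 : (1 : Matrix (Fin n) (Fin n) ℂ) - Complex.I • (K * σ₁)
          = 1 + (-(Complex.I • K)) * σ₁ := by
        rw [neg_mul, smul_mul_assoc, sub_eq_add_neg]
      have h2 : (1 : Matrix (Fin n) (Fin n) ℂ) + σ₁ * (-(Complex.I • K))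
          = 1 - Complex.I • (σ₁ * K) := by
        rw [mul_neg, mul_smul_comm, ← sub_eq_add_neg]
      rw [h1, Matrix.det_one_add_mul_comm, h2]
    -- the factor is invertible
    have hunit : IsUnit ((1 : Matrix (Fin n) (Fin n) ℂ) - Complex.I • (K * σ₁)) := by
      have hcl : matCLM ((1 : Matrix (Fin n) (Fin n) ℂ) - Complex.I • (K * σ₁))
          = 1 - Complex.I • ((Φ ∘L (R ∘L Φs)) ∘L matCLM σ₁) := by
        rw [matCLM_sub, matCLM_one, matCLM_smul, matCLM_mul, hK, matCLM_matInv]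
      have hΦsn : ‖Φs‖ = ‖Φ‖ := by
        rw [hΦs]; exact LinearIsometryEquiv.norm_map ContinuousLinearMap.adjoint Φ
      have hnorm : ‖Complex.I • ((Φ ∘L (R ∘L Φs)) ∘L matCLM σ₁)‖ < 1 := by
        have hns : ‖Complex.I • ((Φ ∘L (R ∘L Φs)) ∘L matCLM σ₁)‖
            ≤ ‖(Φ ∘L (R ∘L Φs)) ∘L matCLM σ₁‖ := by
          have h := norm_smul_le Complex.I ((Φ ∘L (R ∘L Φs)) ∘L matCLM σ₁)
          rwa [Complex.norm_I, one_mul] at h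
        refine lt_of_le_of_lt hns ?_
        have hb1 : ‖(Φ ∘L (R ∘L Φs)) ∘L matCLM σ₁‖ ≤ ‖Φ‖ * (‖R‖ * ‖Φ‖) * ‖matCLM σ₁‖ := by
          calc ‖(Φ ∘L (R ∘L Φs)) ∘L matCLM σ₁‖ ≤ ‖Φ ∘L (R ∘L Φs)‖ * ‖matCLM σ₁‖ :=
                opNorm_comp_le _ _
            _ ≤ ‖Φ‖ * (‖R‖ * ‖Φ‖) * ‖matCLM σ₁‖ := by
                gcongr
                calc ‖Φ ∘L (R ∘L Φs)‖ ≤ ‖Φ‖ * ‖R ∘L Φs‖ := opNorm_comp_le _ _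
                  _ ≤ ‖Φ‖ * (‖R‖ * ‖Φ‖) := by
                      gcongr
                      calc ‖R ∘L Φs‖ ≤ ‖R‖ * ‖Φs‖ := opNorm_comp_le _ _
                        _ = ‖R‖ * ‖Φ‖ := by rw [hΦsn]
        have hb2 : ‖Φ‖ * (‖R‖ * ‖Φ‖) * ‖matCLM σ₁‖
            ≤ ‖Φ‖ * ((2 / ‖l₁‖) * ‖Φ‖) * ‖matCLM σ₁‖ := by gcongr
        have hb3 : ‖Φ‖ * ((2 / ‖l₁‖) * ‖Φ‖) * ‖matCLM σ₁‖
            = (2 * ‖Φ‖ * ‖Φ‖ * ‖matCLM σ₁‖) / ‖l₁‖ := by ring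
        have hb4 : (2 * ‖Φ‖ * ‖Φ‖ * ‖matCLM σ₁‖) / ‖l₁‖ < 1 := by
          rw [div_lt_one (by linarith : (0:ℝ) < ‖l₁‖)]
          rw [hC] at hl; linarith
        calc ‖(Φ ∘L (R ∘L Φs)) ∘L matCLM σ₁‖ ≤ _ := hb1
          _ ≤ _ := hb2
          _ = _ := hb3
          _ < 1 := hb4
      have hUclm : IsUnit (matCLM ((1 : Matrix (Fin n) (Fin n) ℂ) - Complex.I • (K * σ₁))) := by
        rw [hcl]
        exact (Units.oneSub _ hnorm).isUnit
      have := hUclm.map (Matrix.toEuclideanCLM (𝕜 := ℂ) (n := Fin n)).symm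
      rwa [show (Matrix.toEuclideanCLM (𝕜 := ℂ) (n := Fin n)).symm
          (matCLM ((1 : Matrix (Fin n) (Fin n) ℂ) - Complex.I • (K * σ₁)))
          = (1 : Matrix (Fin n) (Fin n) ℂ) - Complex.I • (K * σ₁) from
        (Matrix.toEuclideanCLM (𝕜 := ℂ) (n := Fin n)).symm_apply_apply _] at this
    have hd0 : (1 - Complex.I • (K * σ₁)).det ≠ 0 :=
      ((Matrix.isUnit_iff_isUnit_det _).1 hunit).ne_zero
    -- conclude
    rw [hdeq] at hdet
    have : (1 - Complex.I • (σ₁ * K)).det * (B + γ).det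
        = (1 - Complex.I • (σ₁ * K)).det * (B + γ').det := by
      rw [← hdet, mul_comm]
    have hfin := mul_left_cancel₀ (by rw [← hdeq]; exact hd0) this
    rw [hB] at hfin
    exact hfin
  -- polynomial extension step
  intro l₁ l₂
  classical
  set F : Matrix (Fin n) (Fin n) ℂ → Polynomial ℂ := fun M =>
    ((Polynomial.X : Polynomial ℂ) • σ₂.map Polynomial.C
      - Polynomial.C l₂ • σ₁.map Polynomial.C + M.map Polynomial.C).det with hF
  have heval : ∀ (M : Matrix (Fin n) (Fin n) ℂ) (x : ℂ),
      Polynomial.eval x (F M) = (x • σ₂ - l₂ • σ₁ + M).det := by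
    intro M x
    have h := RingHom.map_det (Polynomial.evalRingHom x)
      ((Polynomial.X : Polynomial ℂ) • σ₂.map Polynomial.C
        - Polynomial.C l₂ • σ₁.map Polynomial.C + M.map Polynomial.C)
    have h2 : ((Polynomial.X : Polynomial ℂ) • σ₂.map Polynomial.C
        - Polynomial.C l₂ • σ₁.map Polynomial.C + M.map Polynomial.C).map
          (Polynomial.eval x) = x • σ₂ - l₂ • σ₁ + M := by
      ext i j
      simp only [Matrix.map_apply, Matrix.add_apply, Matrix.sub_apply, Matrix.smul_apply,
        smul_eq_mul, Polynomial.eval_add, Polynomial.eval_sub, Polynomial.eval_mul,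
        Polynomial.eval_X, Polynomial.eval_C]
    rw [hF]
    simpa [h2] using h
  have hsub : (Complex.ofReal '' Set.Ioi C) ⊆
      {x : ℂ | Polynomial.eval x (F γ) = Polynomial.eval x (F γ')} := by
    rintro x ⟨r, hr, rfl⟩
    have hrC : C < ‖(r : ℂ)‖ := by
      rw [Complex.norm_real, Real.norm_eq_abs, abs_of_pos (lt_trans hC0 hr)]
      exact hr
    simp only [Set.mem_setOf_eq]
    rw [heval, heval]
    exact key _ l₂ hrC
  have hinf : ((Set.Ioi C).image Complex.ofReal).Infinite :=
    (Set.Ioi_infinite C).image (Complex.ofReal_injective.injOn)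
  have hpq : F γ = F γ' :=
    Polynomial.eq_of_infinite_eval_eq _ _ (hinf.mono hsub)
  have hfin := congrArg (Polynomial.eval l₁) hpq
  rw [heval, heval] at hfin
  exact hfin
end

section
/- Let (A₁, A₂; H, Φ, ℂⁿ; σ₁, σ₂, γ, γ̃) be a commutative two-operator vessel, and write the discriminant polynomial as p(λ₁, λ₂) = det(λ₁ σ₂ − λ₂ σ₁ + γ) = Σ_{i,j} c_{ij} λ₁^i λ₂^j with c_{ij} ∈ ℂ. Let Ĥ be the principal subspace of the vessel, i.e. the closed linear span in H of the vectors A₁^{m₁} A₂^{m₂} Φ* e with m₁, m₂ ∈ ℕ and e ∈ ℂⁿ. Then the operator p(A₁, A₂) = Σ_{i,j} c_{ij} A₁^i A₂^j (well defined since A₁ and A₂ commute) vanishes on Ĥ: p(A₁, A₂) h = 0 for every h ∈ Ĥ. -/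
open ContinuousLinearMap

namespace VesselAux

open MvPolynomial

lemma matCLM_single {n : ℕ} (S : Matrix (Fin n) (Fin n) ℂ) (a : Fin n) :
    matCLM S (EuclideanSpace.single a 1) = ∑ k, S k a • EuclideanSpace.single k (1:ℂ) := by
  ext i
  have h1 := congrFun (Matrix.ofLp_toEuclideanCLM (𝕜 := ℂ) S (EuclideanSpace.single a 1)) i
  have h2 : (∑ k, S k a • EuclideanSpace.single k (1:ℂ)) i
      = ∑ k, (S k a • EuclideanSpace.single k (1:ℂ)) i :=
    by rw [WithLp.ofLp_sum, Finset.sum_apply]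
  rw [matCLM, h2]
  simp only [PiLp.smul_apply, EuclideanSpace.single_apply, smul_eq_mul]
  rw [show ((Matrix.toEuclideanCLM (𝕜 := ℂ) S) (EuclideanSpace.single a 1)) i
      = S.mulVec (WithLp.equiv _ _ (EuclideanSpace.single a 1)) i from h1]
  simp [Matrix.mulVec, dotProduct, EuclideanSpace.single_apply]

set_option synthInstance.maxHeartbeats 1000000 in
set_option maxHeartbeats 4000000 in
theorem aux_vanish {n : ℕ} {H : Type*} [NormedAddCommGroup H] [InnerProductSpace ℂ H]
    [CompleteSpace H]
    (A₁ A₂ : H →L[ℂ] H) (hcomm : A₁ * A₂ = A₂ * A₁)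
    (B : EuclideanSpace ℂ (Fin n) →L[ℂ] H)
    (σ₁ σ₂ γ : Matrix (Fin n) (Fin n) ℂ)
    (key : ∀ v, B (matCLM γ v) = A₂ (B (matCLM σ₁ v)) - A₁ (B (matCLM σ₂ v)))
    (c : ℕ → ℕ → ℂ)
    (hdisc : ∀ l₁ l₂ : ℂ, (l₁ • σ₂ - l₂ • σ₁ + γ).det
      = ∑ i ∈ Finset.range (n + 1), ∑ j ∈ Finset.range (n + 1), c i j * l₁ ^ i * l₂ ^ j) :
    ∀ e, (∑ i ∈ Finset.range (n + 1), ∑ j ∈ Finset.range (n + 1),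
        c i j • (A₁ ^ i * A₂ ^ j)) (B e) = 0 := by
  classical
  have hs : ∀ a ∈ ({A₁, A₂} : Set (H →L[ℂ] H)), ∀ b ∈ ({A₁, A₂} : Set (H →L[ℂ] H)),
      a * b = b * a := by
    simp only [Set.mem_insert_iff, Set.mem_singleton_iff]
    rintro a (rfl | rfl) b (rfl | rfl) <;> simp [hcomm]
  letI : CommRing (Algebra.adjoin ℂ ({A₁, A₂} : Set (H →L[ℂ] H))) :=
    Algebra.adjoinCommRingOfComm ℂ hs
  let a₁ : Algebra.adjoin ℂ ({A₁, A₂} : Set (H →L[ℂ] H)) :=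
    ⟨A₁, Algebra.subset_adjoin (by simp)⟩
  let a₂ : Algebra.adjoin ℂ ({A₁, A₂} : Set (H →L[ℂ] H)) :=
    ⟨A₂, Algebra.subset_adjoin (by simp)⟩
  let ε : MvPolynomial (Fin 2) ℂ →ₐ[ℂ] (H →L[ℂ] H) :=
    ((Algebra.adjoin ℂ ({A₁, A₂} : Set (H →L[ℂ] H))).val).comp
      (MvPolynomial.aeval ![a₁, a₂])
  have εX0 : ε (X 0) = A₁ := by simp [ε, a₁]
  have εX1 : ε (X 1) = A₂ := by simp [ε, a₂]
  have εC : ∀ (s : ℂ) (q : MvPolynomial (Fin 2) ℂ), ε (C s * q) = s • ε q := by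
    intro s q
    rw [map_mul, show (C s : MvPolynomial (Fin 2) ℂ) = algebraMap ℂ _ s from rfl,
      AlgHom.commutes, ← Algebra.smul_def]
  have εapp1 : ∀ (q : MvPolynomial (Fin 2) ℂ) (y : H), ε q (A₁ y) = A₁ (ε q y) := by
    intro q y
    have h1 : ε q * A₁ = A₁ * ε q := by
      rw [← εX0, ← map_mul, ← map_mul, mul_comm]
    calc ε q (A₁ y) = (ε q * A₁) y := rfl
      _ = (A₁ * ε q) y := by rw [h1]
      _ = A₁ (ε q y) := rfl
  have εapp2 : ∀ (q : MvPolynomial (Fin 2) ℂ) (y : H), ε q (A₂ y) = A₂ (ε q y) := by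
    intro q y
    have h1 : ε q * A₂ = A₂ * ε q := by
      rw [← εX1, ← map_mul, ← map_mul, mul_comm]
    calc ε q (A₂ y) = (ε q * A₂) y := rfl
      _ = (A₂ * ε q) y := by rw [h1]
      _ = A₂ (ε q y) := rfl
  set sgl : Fin n → EuclideanSpace ℂ (Fin n) := fun k => EuclideanSpace.single k 1 with hsgl
  -- moving a constant matrix from the polynomial side to the operator side
  have claim1 : ∀ (S : Matrix (Fin n) (Fin n) ℂ) (T : EuclideanSpace ℂ (Fin n) →L[ℂ] H)
      (Q : Matrix (Fin n) (Fin n) (MvPolynomial (Fin 2) ℂ)) (b : Fin n),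
      ∑ k, ε (((S.map C : Matrix (Fin n) (Fin n) (MvPolynomial (Fin 2) ℂ)) * Q) k b) (T (sgl k))
        = ∑ a, ε (Q a b) (T (matCLM S (sgl a))) := by
    intro S T Q b
    calc ∑ k, ε (((S.map C : Matrix (Fin n) (Fin n) (MvPolynomial (Fin 2) ℂ)) * Q) k b)
          (T (sgl k))
        = ∑ k, ∑ a, S k a • ε (Q a b) (T (sgl k)) := by
          refine Finset.sum_congr rfl fun k _ => ?_
          rw [Matrix.mul_apply, map_sum, ContinuousLinearMap.sum_apply]
          refine Finset.sum_congr rfl fun a _ => ?_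
          rw [Matrix.map_apply, εC, ContinuousLinearMap.smul_apply]
      _ = ∑ a, ∑ k, S k a • ε (Q a b) (T (sgl k)) := Finset.sum_comm
      _ = ∑ a, ε (Q a b) (T (matCLM S (sgl a))) := by
          refine Finset.sum_congr rfl fun a _ => ?_
          rw [hsgl, matCLM_single, map_sum, map_sum]
          refine Finset.sum_congr rfl fun k _ => ?_
          rw [map_smul, map_smul]
  -- the diagonal computation
  have claim4 : ∀ (d : MvPolynomial (Fin 2) ℂ) (T : EuclideanSpace ℂ (Fin n) →L[ℂ] H) (b : Fin n),
      ∑ k, ε ((d • (1 : Matrix (Fin n) (Fin n) (MvPolynomial (Fin 2) ℂ))) k b) (T (sgl k))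
        = ε d (T (sgl b)) := by
    intro d T b
    rw [Finset.sum_eq_single b]
    · simp [Matrix.smul_apply, Matrix.one_apply]
    · intro k _ hk
      simp [Matrix.smul_apply, Matrix.one_apply, hk]
    · simp
  -- the polynomial matrix of the vessel
  set M : Matrix (Fin n) (Fin n) (MvPolynomial (Fin 2) ℂ) :=
    (X 0 : MvPolynomial (Fin 2) ℂ) • (σ₂.map C : Matrix (Fin n) (Fin n) (MvPolynomial (Fin 2) ℂ))
      - (X 1 : MvPolynomial (Fin 2) ℂ) • (σ₁.map C : Matrix (Fin n) (Fin n) (MvPolynomial (Fin 2) ℂ))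
      + (γ.map C : Matrix (Fin n) (Fin n) (MvPolynomial (Fin 2) ℂ)) with hM
  set N : Matrix (Fin n) (Fin n) (MvPolynomial (Fin 2) ℂ) := M.adjugate with hN
  have hsplit : M * N
      = (X 0 : MvPolynomial (Fin 2) ℂ) • ((σ₂.map C : Matrix (Fin n) (Fin n) (MvPolynomial (Fin 2) ℂ)) * N)
        - (X 1 : MvPolynomial (Fin 2) ℂ) • ((σ₁.map C : Matrix (Fin n) (Fin n) (MvPolynomial (Fin 2) ℂ)) * N)
        + (γ.map C : Matrix (Fin n) (Fin n) (MvPolynomial (Fin 2) ℂ)) * N := by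
    rw [hM, add_mul, sub_mul, Matrix.smul_mul, Matrix.smul_mul]
  have main : ∀ b : Fin n, ε M.det (B (sgl b)) = 0 := by
    intro b
    have e0 : ε M.det (B (sgl b)) = ∑ k, ε ((M * N) k b) (B (sgl k)) := by
      rw [hN, Matrix.mul_adjugate]
      exact (claim4 _ _ _).symm
    rw [e0]
    have term1 : ∑ k, ε (((X 0 : MvPolynomial (Fin 2) ℂ) • ((σ₂.map C : Matrix (Fin n) (Fin n)
          (MvPolynomial (Fin 2) ℂ)) * N)) k b) (B (sgl k))
        = A₁ (∑ a, ε (N a b) (B (matCLM σ₂ (sgl a)))) := by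
      calc ∑ k, ε (((X 0 : MvPolynomial (Fin 2) ℂ) • ((σ₂.map C : Matrix (Fin n) (Fin n)
              (MvPolynomial (Fin 2) ℂ)) * N)) k b) (B (sgl k))
          = ∑ k, A₁ (ε (((σ₂.map C : Matrix (Fin n) (Fin n)
              (MvPolynomial (Fin 2) ℂ)) * N) k b) (B (sgl k))) := by
            refine Finset.sum_congr rfl fun k _ => ?_
            rw [Matrix.smul_apply, smul_eq_mul, map_mul, εX0, ContinuousLinearMap.mul_apply]
        _ = A₁ (∑ k, ε (((σ₂.map C : Matrix (Fin n) (Fin n)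
              (MvPolynomial (Fin 2) ℂ)) * N) k b) (B (sgl k))) := (map_sum A₁ _ _).symm
        _ = A₁ (∑ a, ε (N a b) (B (matCLM σ₂ (sgl a)))) := by rw [claim1]
    have term2 : ∑ k, ε (((X 1 : MvPolynomial (Fin 2) ℂ) • ((σ₁.map C : Matrix (Fin n) (Fin n)
          (MvPolynomial (Fin 2) ℂ)) * N)) k b) (B (sgl k))
        = A₂ (∑ a, ε (N a b) (B (matCLM σ₁ (sgl a)))) := by
      calc ∑ k, ε (((X 1 : MvPolynomial (Fin 2) ℂ) • ((σ₁.map C : Matrix (Fin n) (Fin n)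
              (MvPolynomial (Fin 2) ℂ)) * N)) k b) (B (sgl k))
          = ∑ k, A₂ (ε (((σ₁.map C : Matrix (Fin n) (Fin n)
              (MvPolynomial (Fin 2) ℂ)) * N) k b) (B (sgl k))) := by
            refine Finset.sum_congr rfl fun k _ => ?_
            rw [Matrix.smul_apply, smul_eq_mul, map_mul, εX1, ContinuousLinearMap.mul_apply]
        _ = A₂ (∑ k, ε (((σ₁.map C : Matrix (Fin n) (Fin n)
              (MvPolynomial (Fin 2) ℂ)) * N) k b) (B (sgl k))) := (map_sum A₂ _ _).symm
        _ = A₂ (∑ a, ε (N a b) (B (matCLM σ₁ (sgl a)))) := by rw [claim1]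
    have term3 : ∑ k, ε (((γ.map C : Matrix (Fin n) (Fin n)
          (MvPolynomial (Fin 2) ℂ)) * N) k b) (B (sgl k))
        = A₂ (∑ a, ε (N a b) (B (matCLM σ₁ (sgl a))))
          - A₁ (∑ a, ε (N a b) (B (matCLM σ₂ (sgl a)))) := by
      calc ∑ k, ε (((γ.map C : Matrix (Fin n) (Fin n)
              (MvPolynomial (Fin 2) ℂ)) * N) k b) (B (sgl k))
          = ∑ a, ε (N a b) (B (matCLM γ (sgl a))) := claim1 γ B N b
        _ = ∑ a, (A₂ (ε (N a b) (B (matCLM σ₁ (sgl a))))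
              - A₁ (ε (N a b) (B (matCLM σ₂ (sgl a))))) := by
            refine Finset.sum_congr rfl fun a _ => ?_
            rw [key, map_sub, εapp2, εapp1]
        _ = A₂ (∑ a, ε (N a b) (B (matCLM σ₁ (sgl a))))
              - A₁ (∑ a, ε (N a b) (B (matCLM σ₂ (sgl a)))) := by
            rw [Finset.sum_sub_distrib, map_sum, map_sum]
    calc ∑ k, ε ((M * N) k b) (B (sgl k))
        = ∑ k, (ε (((X 0 : MvPolynomial (Fin 2) ℂ) • ((σ₂.map C : Matrix (Fin n) (Fin n)
              (MvPolynomial (Fin 2) ℂ)) * N)) k b) (B (sgl k))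
            - ε (((X 1 : MvPolynomial (Fin 2) ℂ) • ((σ₁.map C : Matrix (Fin n) (Fin n)
              (MvPolynomial (Fin 2) ℂ)) * N)) k b) (B (sgl k))
            + ε (((γ.map C : Matrix (Fin n) (Fin n)
              (MvPolynomial (Fin 2) ℂ)) * N) k b) (B (sgl k))) := by
          refine Finset.sum_congr rfl fun k _ => ?_
          rw [hsplit, Matrix.add_apply, Matrix.sub_apply, map_add, map_sub,
            ContinuousLinearMap.add_apply, ContinuousLinearMap.sub_apply]
      _ = 0 := by
          rw [Finset.sum_add_distrib, Finset.sum_sub_distrib, term1, term2, term3]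
          abel
  -- identification of the determinant polynomial
  have hdet : M.det = ∑ i ∈ Finset.range (n + 1), ∑ j ∈ Finset.range (n + 1),
      C (c i j) * X 0 ^ i * X 1 ^ j := by
    apply MvPolynomial.funext
    intro x
    have h1 : (eval x) M.det = (M.map (eval x)).det := by
      rw [RingHom.map_det]
      rw [RingHom.mapMatrix_apply]
    have h2 : M.map (eval x) = x 0 • σ₂ - x 1 • σ₁ + γ := by
      ext k b
      rw [hM]
      simp [Matrix.map_apply, Matrix.sub_apply, Matrix.add_apply, Matrix.smul_apply,
        smul_eq_mul]
    rw [h1, h2, hdisc (x 0) (x 1)]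
    simp [map_sum]
  -- computing ε on the determinant
  have hεdet : ε M.det = ∑ i ∈ Finset.range (n + 1), ∑ j ∈ Finset.range (n + 1),
      c i j • (A₁ ^ i * A₂ ^ j) := by
    rw [hdet, map_sum]
    refine Finset.sum_congr rfl fun i _ => ?_
    rw [map_sum]
    refine Finset.sum_congr rfl fun j _ => ?_
    rw [mul_assoc, εC, map_mul, map_pow, map_pow, εX0, εX1]
  -- conclusion
  have hb : ∀ b : Fin n, (∑ i ∈ Finset.range (n + 1), ∑ j ∈ Finset.range (n + 1),
      c i j • (A₁ ^ i * A₂ ^ j)) (B (sgl b)) = 0 := by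
    intro b
    rw [← hεdet]
    exact main b
  intro e
  have hP0B : ((∑ i ∈ Finset.range (n + 1), ∑ j ∈ Finset.range (n + 1),
        c i j • (A₁ ^ i * A₂ ^ j)) ∘L B : EuclideanSpace ℂ (Fin n) →L[ℂ] H) = 0 := by
    apply ContinuousLinearMap.coe_injective
    apply Module.Basis.ext (EuclideanSpace.basisFun (Fin n) ℂ).toBasis
    intro b
    simp only [OrthonormalBasis.coe_toBasis, EuclideanSpace.basisFun_apply,
      ContinuousLinearMap.coe_coe, ContinuousLinearMap.comp_apply,
      ContinuousLinearMap.zero_apply, LinearMap.zero_apply]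
    exact hb b
  calc (∑ i ∈ Finset.range (n + 1), ∑ j ∈ Finset.range (n + 1),
        c i j • (A₁ ^ i * A₂ ^ j)) (B e)
      = ((∑ i ∈ Finset.range (n + 1), ∑ j ∈ Finset.range (n + 1),
        c i j • (A₁ ^ i * A₂ ^ j)) ∘L B) e := rfl
    _ = 0 := by rw [hP0B]; rfl


end VesselAux

/-- **The generalized Cayley–Hamilton theorem for commutative two-operator vessels.**
If `p(λ₁, λ₂) = det(λ₁σ₂ − λ₂σ₁ + γ) = Σ_{i,j} c_{ij} λ₁^i λ₂^j` is the discriminant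
polynomial of the vessel `(A₁, A₂; H, Φ, ℂⁿ; σ₁, σ₂, γ, γ̃)`, then
`p(A₁, A₂) = Σ_{i,j} c_{ij} A₁^i A₂^j` vanishes on the principal subspace `Ĥ`, the closed
linear span of the vectors `A₁^{m₁} A₂^{m₂} Φ* e`. -/
theorem vessel_discriminant_vanishes_on_principal_subspace
    (n : ℕ)
    (H : Type*) [NormedAddCommGroup H] [InnerProductSpace ℂ H] [CompleteSpace H]
    (A₁ A₂ : H →L[ℂ] H) (hcomm : A₁ * A₂ = A₂ * A₁)
    (Φ : H →L[ℂ] EuclideanSpace ℂ (Fin n))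
    (σ₁ σ₂ γ γ' : Matrix (Fin n) (Fin n) ℂ)
    (hσ₁ : σ₁.IsHermitian) (hσ₂ : σ₂.IsHermitian)
    (hγ : γ.IsHermitian) (hγ' : γ'.IsHermitian)
    (hcol₁ : Complex.I⁻¹ • (A₁ - ContinuousLinearMap.adjoint A₁)
        = ContinuousLinearMap.adjoint Φ ∘L matCLM σ₁ ∘L Φ)
    (hcol₂ : Complex.I⁻¹ • (A₂ - ContinuousLinearMap.adjoint A₂)
        = ContinuousLinearMap.adjoint Φ ∘L matCLM σ₂ ∘L Φ)
    (hin : matCLM σ₁ ∘L Φ ∘L ContinuousLinearMap.adjoint A₂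
          - matCLM σ₂ ∘L Φ ∘L ContinuousLinearMap.adjoint A₁ = matCLM γ ∘L Φ)
    (hout : matCLM σ₁ ∘L Φ ∘L A₂ - matCLM σ₂ ∘L Φ ∘L A₁ = matCLM γ' ∘L Φ)
    (hlink : Complex.I • (matCLM σ₁ ∘L Φ ∘L ContinuousLinearMap.adjoint Φ ∘L matCLM σ₂
          - matCLM σ₂ ∘L Φ ∘L ContinuousLinearMap.adjoint Φ ∘L matCLM σ₁)
        = matCLM γ' - matCLM γ)
    (c : ℕ → ℕ → ℂ)
    (hdisc : ∀ l₁ l₂ : ℂ,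
      (l₁ • σ₂ - l₂ • σ₁ + γ).det
        = ∑ i ∈ Finset.range (n + 1), ∑ j ∈ Finset.range (n + 1), c i j * l₁ ^ i * l₂ ^ j)
    (h : H)
    (hh : h ∈ (Submodule.span ℂ
        {x : H | ∃ (m₁ m₂ : ℕ) (e : EuclideanSpace ℂ (Fin n)),
          x = (A₁ ^ m₁ * A₂ ^ m₂) (ContinuousLinearMap.adjoint Φ e)}).topologicalClosure) :
    (∑ i ∈ Finset.range (n + 1), ∑ j ∈ Finset.range (n + 1), c i j • (A₁ ^ i * A₂ ^ j)) h
      = 0 := by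
  classical
  have hadj : ∀ (σ : Matrix (Fin n) (Fin n) ℂ), σ.IsHermitian →
      ContinuousLinearMap.adjoint (matCLM σ) = matCLM σ := by
    intro σ hσ
    rw [← ContinuousLinearMap.star_eq_adjoint, matCLM, ← map_star,
      Matrix.star_eq_conjTranspose, hσ.eq]
  have key : ∀ v, (ContinuousLinearMap.adjoint Φ) (matCLM γ v)
      = A₂ ((ContinuousLinearMap.adjoint Φ) (matCLM σ₁ v))
        - A₁ ((ContinuousLinearMap.adjoint Φ) (matCLM σ₂ v)) := by
    intro v
    have h2 := congrArg ContinuousLinearMap.adjoint hin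
    rw [map_sub] at h2
    simp only [adjoint_comp, adjoint_adjoint, hadj σ₁ hσ₁, hadj σ₂ hσ₂, hadj γ hγ] at h2
    have h3 := congrArg (fun T : EuclideanSpace ℂ (Fin n) →L[ℂ] H => T v) h2
    simpa only [ContinuousLinearMap.sub_apply, ContinuousLinearMap.comp_apply] using h3.symm
  have hv := VesselAux.aux_vanish A₁ A₂ hcomm (ContinuousLinearMap.adjoint Φ) σ₁ σ₂ γ key c hdisc
  set P0 : H →L[ℂ] H := ∑ i ∈ Finset.range (n + 1), ∑ j ∈ Finset.range (n + 1),
    c i j • (A₁ ^ i * A₂ ^ j) with hP0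
  have c12 : Commute A₁ A₂ := hcomm
  have hPc : ∀ m₁ m₂ : ℕ, Commute P0 (A₁ ^ m₁ * A₂ ^ m₂) := by
    intro m₁ m₂
    rw [hP0]
    refine Commute.sum_left _ _ _ fun i _ => ?_
    refine Commute.sum_left _ _ _ fun j _ => ?_
    refine Commute.smul_left ?_ _
    have h11 : Commute (A₁ ^ i * A₂ ^ j) (A₁ ^ m₁) :=
      Commute.mul_left ((Commute.refl A₁).pow_pow i m₁) ((c12.symm.pow_pow j m₁))
    have h22 : Commute (A₁ ^ i * A₂ ^ j) (A₂ ^ m₂) :=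
      Commute.mul_left (c12.pow_pow i m₂) ((Commute.refl A₂).pow_pow j m₂)
    exact h11.mul_right h22
  have hker : Submodule.span ℂ
      {x : H | ∃ (m₁ m₂ : ℕ) (e : EuclideanSpace ℂ (Fin n)),
        x = (A₁ ^ m₁ * A₂ ^ m₂) (ContinuousLinearMap.adjoint Φ e)} ≤ LinearMap.ker (P0 : H →ₗ[ℂ] H) := by
    rw [Submodule.span_le]
    rintro x ⟨m₁, m₂, e, rfl⟩
    simp only [SetLike.mem_coe, LinearMap.mem_ker]
    have h1 : P0 ((A₁ ^ m₁ * A₂ ^ m₂) ((ContinuousLinearMap.adjoint Φ) e))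
        = (A₁ ^ m₁ * A₂ ^ m₂) (P0 ((ContinuousLinearMap.adjoint Φ) e)) := by
      calc P0 ((A₁ ^ m₁ * A₂ ^ m₂) ((ContinuousLinearMap.adjoint Φ) e))
          = (P0 * (A₁ ^ m₁ * A₂ ^ m₂)) ((ContinuousLinearMap.adjoint Φ) e) := rfl
        _ = ((A₁ ^ m₁ * A₂ ^ m₂) * P0) ((ContinuousLinearMap.adjoint Φ) e) := by
            rw [hPc m₁ m₂]
        _ = (A₁ ^ m₁ * A₂ ^ m₂) (P0 ((ContinuousLinearMap.adjoint Φ) e)) := rfl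
    rw [ContinuousLinearMap.coe_coe, h1, hv e, map_zero]
  have hclosed : IsClosed ((LinearMap.ker (P0 : H →ₗ[ℂ] H) : Submodule ℂ H) : Set H) := by
    have heq : ((LinearMap.ker (P0 : H →ₗ[ℂ] H) : Submodule ℂ H) : Set H) = P0 ⁻¹' {0} := rfl
    rw [heq]
    exact IsClosed.preimage P0.continuous isClosed_singleton
  have hle := Submodule.topologicalClosure_minimal _ hker hclosed
  exact LinearMap.mem_ker.mp (hle hh)
end

section
/- Let (B; H, Φ, ℂⁿ; σ) be a colligation and let z ∈ ℂ be such that B − zI is boundedly invertible. Define the characteristic function W(z) = I − i Φ (B − zI)^{-1} Φ* σ, a linear operator on ℂⁿ. Then W(z)* σ W(z) − σ = 2·(Im z) · ((B − zI)^{-1} Φ* σ)* ((B − zI)^{-1} Φ* σ). In particular, W(z)* σ W(z) = σ whenever z is real, and W(z)* σ W(z) ≥ σ (in the sense of Hermitian operators on ℂⁿ) whenever Im z > 0. -/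
set_option maxHeartbeats 1000000


open ContinuousLinearMap

/-- **Metric properties of the characteristic function of a colligation.**
Let `(B; H, Φ, ℂⁿ; σ)` be a colligation, `z ∈ ℂ` with `B − zI` boundedly invertible
(with inverse `R`), and `W = I − iΦ(B − zI)⁻¹Φ*σ`. Then
`W*σW − σ = 2·(Im z)·((B − zI)⁻¹Φ*σ)*((B − zI)⁻¹Φ*σ)`; in particular `W*σW = σ`
when `z` is real and `W*σW ≥ σ` (positive semidefiniteness of the difference)
when `Im z > 0`. -/
theorem colligation_characteristic_function_metric_properties
    (n : ℕ)
    (H : Type*) [NormedAddCommGroup H] [InnerProductSpace ℂ H] [CompleteSpace H]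
    (B : H →L[ℂ] H) (Φ : H →L[ℂ] EuclideanSpace ℂ (Fin n))
    (σ : Matrix (Fin n) (Fin n) ℂ) (hσ : σ.IsHermitian)
    (hcol : Complex.I⁻¹ • (B - ContinuousLinearMap.adjoint B)
        = ContinuousLinearMap.adjoint Φ ∘L matCLM σ ∘L Φ)
    (z : ℂ) (R : H →L[ℂ] H)
    (hR₁ : (B - z • (1 : H →L[ℂ] H)) ∘L R = 1)
    (hR₂ : R ∘L (B - z • (1 : H →L[ℂ] H)) = 1) :
    ∀ W : EuclideanSpace ℂ (Fin n) →L[ℂ] EuclideanSpace ℂ (Fin n),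
      ∀ C : EuclideanSpace ℂ (Fin n) →L[ℂ] H,
      W = 1 - Complex.I • (Φ ∘L R ∘L ContinuousLinearMap.adjoint Φ ∘L matCLM σ) →
      C = R ∘L ContinuousLinearMap.adjoint Φ ∘L matCLM σ →
      (ContinuousLinearMap.adjoint W ∘L matCLM σ ∘L W - matCLM σ
          = ((2 * z.im : ℝ) : ℂ) • (ContinuousLinearMap.adjoint C ∘L C))
        ∧ (z.im = 0 → ContinuousLinearMap.adjoint W ∘L matCLM σ ∘L W = matCLM σ)
        ∧ (0 < z.im →
            (ContinuousLinearMap.adjoint W ∘L matCLM σ ∘L W - matCLM σ).IsPositive) := by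
  intro W C hW hC
  set S := matCLM σ with hSdef
  have hS : ContinuousLinearMap.adjoint S = S := by
    rw [← ContinuousLinearMap.star_eq_adjoint, hSdef]
    show star (Matrix.toEuclideanCLM (𝕜 := ℂ) σ) = Matrix.toEuclideanCLM (𝕜 := ℂ) σ
    rw [← map_star, show star σ = σ from hσ]
  have hkey : ContinuousLinearMap.adjoint Φ ∘L S = (B - z • (1 : H →L[ℂ] H)) ∘L C := by
    rw [hC, ← comp_assoc, hR₁, ContinuousLinearMap.one_def, ContinuousLinearMap.id_comp]
  have hzbar : ContinuousLinearMap.adjoint (B - z • (1 : H →L[ℂ] H))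
      = ContinuousLinearMap.adjoint B - (starRingEnd ℂ z) • (1 : H →L[ℂ] H) := by
    rw [map_sub]
    congr 1
    rw [← ContinuousLinearMap.star_eq_adjoint]
    simp [star_smul]
  have hkey' : S ∘L Φ
      = ContinuousLinearMap.adjoint C ∘L (ContinuousLinearMap.adjoint B
          - (starRingEnd ℂ z) • (1 : H →L[ℂ] H)) := by
    have := congrArg ContinuousLinearMap.adjoint hkey
    rwa [adjoint_comp, adjoint_comp, adjoint_adjoint, hS, hzbar] at this
  have hWC : W = 1 - Complex.I • (Φ ∘L C) := by rw [hW, hC]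
  have hWadj : ContinuousLinearMap.adjoint W
      = 1 + Complex.I • (ContinuousLinearMap.adjoint C ∘L ContinuousLinearMap.adjoint Φ) := by
    rw [hWC, ← ContinuousLinearMap.star_eq_adjoint]
    rw [star_sub, star_smul, star_one, Complex.star_def, Complex.conj_I,
      ContinuousLinearMap.star_eq_adjoint, adjoint_comp, neg_smul, sub_neg_eq_add]
  -- scalar identity
  have hcz : ((2 * z.im : ℝ) : ℂ) = Complex.I * (starRingEnd ℂ z) - Complex.I * z := by
    have h := Complex.sub_conj z
    have h2 : Complex.I * ((starRingEnd ℂ z) - z) = ((2 * z.im : ℝ) : ℂ) := by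
      have e : (starRingEnd ℂ z) - z = -(z - starRingEnd ℂ z) := by ring
      rw [e, h, mul_neg, mul_comm ((2 * z.im : ℝ) : ℂ) Complex.I, ← mul_assoc,
        Complex.I_mul_I]
      ring
    rw [← mul_sub]
    exact h2.symm
  have hmid : Complex.I • (B - z • (1 : H →L[ℂ] H))
        - Complex.I • (ContinuousLinearMap.adjoint B - (starRingEnd ℂ z) • (1 : H →L[ℂ] H))
        + Complex.I⁻¹ • (B - ContinuousLinearMap.adjoint B)
      = ((2 * z.im : ℝ) : ℂ) • (1 : H →L[ℂ] H) := by
    rw [hcz, Complex.inv_I]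
    module
  -- rewriting facts in right-associated normal form
  have f3 : ContinuousLinearMap.adjoint Φ ∘L (S ∘L (Φ ∘L C))
      = (Complex.I⁻¹ • (B - ContinuousLinearMap.adjoint B)) ∘L C := by
    show (ContinuousLinearMap.adjoint Φ ∘L (S ∘L Φ)) ∘L C = _
    rw [← hcol]
  have f1 : S ∘L (Φ ∘L C)
      = ContinuousLinearMap.adjoint C ∘L ((ContinuousLinearMap.adjoint B
          - (starRingEnd ℂ z) • (1 : H →L[ℂ] H)) ∘L C) := by
    show (S ∘L Φ) ∘L C = _
    rw [hkey']
    rfl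
  have hexp : ContinuousLinearMap.adjoint W ∘L S ∘L W
      = S - Complex.I • (ContinuousLinearMap.adjoint C ∘L ((ContinuousLinearMap.adjoint B
              - (starRingEnd ℂ z) • (1 : H →L[ℂ] H)) ∘L C))
          + Complex.I • (ContinuousLinearMap.adjoint C ∘L ((B - z • (1 : H →L[ℂ] H)) ∘L C))
          + ContinuousLinearMap.adjoint C
              ∘L ((Complex.I⁻¹ • (B - ContinuousLinearMap.adjoint B)) ∘L C) := by
    rw [hWadj, hWC]
    simp only [comp_sub, sub_comp, comp_add, add_comp, comp_smul, smul_comp, smul_sub,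
      smul_add, smul_smul, Complex.I_mul_I, neg_smul, one_smul,
      ContinuousLinearMap.one_def, ContinuousLinearMap.id_comp, ContinuousLinearMap.comp_id,
      comp_assoc]
    rw [f3, f1, hkey]
    simp only [comp_sub, sub_comp, comp_add, add_comp, comp_smul, smul_comp, smul_sub,
      smul_add, smul_smul, ContinuousLinearMap.one_def, ContinuousLinearMap.id_comp,
      ContinuousLinearMap.comp_id, comp_assoc]
    abel
  have main : ContinuousLinearMap.adjoint W ∘L S ∘L W - S
      = ((2 * z.im : ℝ) : ℂ) • (ContinuousLinearMap.adjoint C ∘L C) := by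
    rw [hexp]
    have step : S - Complex.I • (ContinuousLinearMap.adjoint C ∘L ((ContinuousLinearMap.adjoint B
              - (starRingEnd ℂ z) • (1 : H →L[ℂ] H)) ∘L C))
          + Complex.I • (ContinuousLinearMap.adjoint C ∘L ((B - z • (1 : H →L[ℂ] H)) ∘L C))
          + ContinuousLinearMap.adjoint C
              ∘L ((Complex.I⁻¹ • (B - ContinuousLinearMap.adjoint B)) ∘L C)
          - S
        = ContinuousLinearMap.adjoint C ∘L ((Complex.I • (B - z • (1 : H →L[ℂ] H))
            - Complex.I • (ContinuousLinearMap.adjoint B - (starRingEnd ℂ z) • (1 : H →L[ℂ] H))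
            + Complex.I⁻¹ • (B - ContinuousLinearMap.adjoint B)) ∘L C) := by
      simp only [comp_sub, sub_comp, comp_add, add_comp, comp_smul, smul_comp, comp_assoc]
      abel
    rw [step, hmid]
    simp only [smul_comp, comp_smul, ContinuousLinearMap.one_def,
      ContinuousLinearMap.id_comp]
  refine ⟨main, ?_, ?_⟩
  · intro him
    have h := main
    rw [him] at h
    simpa [sub_eq_zero] using h
  · intro him
    rw [main]
    have hpos : (((2 * z.im : ℝ) : ℂ) • (1 : H →L[ℂ] H)).IsPositive := by
      rw [ContinuousLinearMap.isPositive_def']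
      constructor
      · show star _ = _
        rw [star_smul, star_one, Complex.star_def, Complex.conj_ofReal]
      · intro x
        simp only [ContinuousLinearMap.reApplyInnerSelf, ContinuousLinearMap.smul_apply,
          ContinuousLinearMap.one_apply, inner_smul_left, Complex.conj_ofReal,
          inner_self_eq_norm_sq_to_K, RCLike.re_to_complex]
        have e : ∀ r : ℝ, (RCLike.ofReal r : ℂ) = Complex.ofReal r := fun _ => rfl
        rw [e, ← Complex.ofReal_pow, ← Complex.ofReal_mul, Complex.ofReal_re]
        positivity
    have h2 := hpos.adjoint_conj C
    have h3 : ContinuousLinearMap.adjoint C ∘L (((2 * z.im : ℝ) : ℂ) • (1 : H →L[ℂ] H)) ∘L C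
        = ((2 * z.im : ℝ) : ℂ) • (ContinuousLinearMap.adjoint C ∘L C) := by
      simp only [comp_smul, smul_comp, ContinuousLinearMap.one_def,
        ContinuousLinearMap.id_comp]
    rwa [h3] at h2
end

section
/- Let (A₁, A₂; H, Φ, ℂⁿ; σ₁, σ₂, γ, γ̃) be a commutative two-operator vessel. Let (λ₁, λ₂) ∈ ℂ² and let ξ₁, ξ₂ ∈ ℂ be such that ξ₁A₁ + ξ₂A₂ − (ξ₁λ₁ + ξ₂λ₂)I is boundedly invertible, and set W(ξ₁, ξ₂, z) = I − i Φ (ξ₁A₁ + ξ₂A₂ − zI)^{-1} Φ* (ξ₁σ₁ + ξ₂σ₂) with z = ξ₁λ₁ + ξ₂λ₂. Then W(ξ₁, ξ₂, z) maps the input fiber ker(λ₁σ₂ − λ₂σ₁ + γ) ⊆ ℂⁿ into the output fiber ker(λ₁σ₂ − λ₂σ₁ + γ̃) ⊆ ℂⁿ. -/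
set_option maxHeartbeats 1000000


open ContinuousLinearMap

lemma matCLM_herm {n : ℕ} (A : Matrix (Fin n) (Fin n) ℂ) (hA : A.IsHermitian) :
    ContinuousLinearMap.adjoint (matCLM A) = matCLM A := by
  rw [← star_eq_adjoint, matCLM, ← map_star]
  congr 1

lemma matCLM_apply_add {n : ℕ} (A B : Matrix (Fin n) (Fin n) ℂ) (x : EuclideanSpace ℂ (Fin n)) :
    matCLM (A + B) x = matCLM A x + matCLM B x := by simp [matCLM]

lemma matCLM_apply_sub {n : ℕ} (A B : Matrix (Fin n) (Fin n) ℂ) (x : EuclideanSpace ℂ (Fin n)) :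
    matCLM (A - B) x = matCLM A x - matCLM B x := by simp [matCLM]

lemma matCLM_apply_smul {n : ℕ} (c : ℂ) (A : Matrix (Fin n) (Fin n) ℂ) (x : EuclideanSpace ℂ (Fin n)) :
    matCLM (c • A) x = c • matCLM A x := by simp [matCLM]


/-- **The complete characteristic function of a commutative two-operator vessel maps the
input fiber into the output fiber.** With `z = ξ₁λ₁ + ξ₂λ₂`, `R` the bounded inverse of
`ξ₁A₁ + ξ₂A₂ − zI`, and `W = I − iΦ(ξ₁A₁ + ξ₂A₂ − zI)⁻¹Φ*(ξ₁σ₁ + ξ₂σ₂)`, the operator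
`W` maps `ker(λ₁σ₂ − λ₂σ₁ + γ)` into `ker(λ₁σ₂ − λ₂σ₁ + γ̃)`. -/
theorem vessel_CCF_maps_input_fiber_to_output_fiber
    (n : ℕ)
    (H : Type*) [NormedAddCommGroup H] [InnerProductSpace ℂ H] [CompleteSpace H]
    (A₁ A₂ : H →L[ℂ] H) (hcomm : A₁ * A₂ = A₂ * A₁)
    (Φ : H →L[ℂ] EuclideanSpace ℂ (Fin n))
    (σ₁ σ₂ γ γ' : Matrix (Fin n) (Fin n) ℂ)
    (hσ₁ : σ₁.IsHermitian) (hσ₂ : σ₂.IsHermitian)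
    (hγ : γ.IsHermitian) (hγ' : γ'.IsHermitian)
    (hcol₁ : Complex.I⁻¹ • (A₁ - ContinuousLinearMap.adjoint A₁)
        = ContinuousLinearMap.adjoint Φ ∘L matCLM σ₁ ∘L Φ)
    (hcol₂ : Complex.I⁻¹ • (A₂ - ContinuousLinearMap.adjoint A₂)
        = ContinuousLinearMap.adjoint Φ ∘L matCLM σ₂ ∘L Φ)
    (hin : matCLM σ₁ ∘L Φ ∘L ContinuousLinearMap.adjoint A₂
          - matCLM σ₂ ∘L Φ ∘L ContinuousLinearMap.adjoint A₁ = matCLM γ ∘L Φ)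
    (hout : matCLM σ₁ ∘L Φ ∘L A₂ - matCLM σ₂ ∘L Φ ∘L A₁ = matCLM γ' ∘L Φ)
    (hlink : Complex.I • (matCLM σ₁ ∘L Φ ∘L ContinuousLinearMap.adjoint Φ ∘L matCLM σ₂
          - matCLM σ₂ ∘L Φ ∘L ContinuousLinearMap.adjoint Φ ∘L matCLM σ₁)
        = matCLM γ' - matCLM γ)
    (l₁ l₂ ξ₁ ξ₂ : ℂ) (R : H →L[ℂ] H)
    (hR₁ : ((ξ₁ • A₁ + ξ₂ • A₂) - (ξ₁ * l₁ + ξ₂ * l₂) • (1 : H →L[ℂ] H)) ∘L R = 1)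
    (hR₂ : R ∘L ((ξ₁ • A₁ + ξ₂ • A₂) - (ξ₁ * l₁ + ξ₂ * l₂) • (1 : H →L[ℂ] H)) = 1)
    (u : EuclideanSpace ℂ (Fin n))
    (hu : matCLM (l₁ • σ₂ - l₂ • σ₁ + γ) u = 0) :
    matCLM (l₁ • σ₂ - l₂ • σ₁ + γ')
      ((1 - Complex.I •
          (Φ ∘L R ∘L ContinuousLinearMap.adjoint Φ ∘L matCLM (ξ₁ • σ₁ + ξ₂ • σ₂))) u)
      = 0 := by
  -- pointwise colligation conditions, rearranged
  have hcol₁' : ∀ x : H, A₁ x - adjoint A₁ x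
      = Complex.I • adjoint Φ (matCLM σ₁ (Φ x)) := by
    intro x
    have h1 := DFunLike.congr_fun hcol₁ x
    simp only [smul_apply, sub_apply, comp_apply] at h1
    rw [← h1, smul_smul, Complex.mul_inv_cancel Complex.I_ne_zero, one_smul]
  have hcol₂' : ∀ x : H, A₂ x - adjoint A₂ x
      = Complex.I • adjoint Φ (matCLM σ₂ (Φ x)) := by
    intro x
    have h1 := DFunLike.congr_fun hcol₂ x
    simp only [smul_apply, sub_apply, comp_apply] at h1
    rw [← h1, smul_smul, Complex.mul_inv_cancel Complex.I_ne_zero, one_smul]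
  -- pointwise input / linkage
  have hinp : ∀ x : H, matCLM σ₁ (Φ (adjoint A₂ x)) - matCLM σ₂ (Φ (adjoint A₁ x))
      = matCLM γ (Φ x) := by
    intro x
    simpa using DFunLike.congr_fun hin x
  have hlinkp : ∀ x : EuclideanSpace ℂ (Fin n),
      Complex.I • (matCLM σ₁ (Φ (adjoint Φ (matCLM σ₂ x)))
        - matCLM σ₂ (Φ (adjoint Φ (matCLM σ₁ x))))
      = matCLM γ' x - matCLM γ x := by
    intro x
    simpa using DFunLike.congr_fun hlink x
  -- adjoint of the input condition
  have hinadj : ∀ x : EuclideanSpace ℂ (Fin n),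
      A₂ (adjoint Φ (matCLM σ₁ x)) - A₁ (adjoint Φ (matCLM σ₂ x))
      = adjoint Φ (matCLM γ x) := by
    intro x
    have h1 := congrArg ContinuousLinearMap.adjoint hin
    rw [map_sub] at h1
    simp only [adjoint_comp, adjoint_adjoint,
      matCLM_herm σ₁ hσ₁, matCLM_herm σ₂ hσ₂, matCLM_herm γ hγ] at h1
    simpa using DFunLike.congr_fun h1 x
  -- adjoint commutativity
  have hcommadj : ∀ x : H, adjoint A₁ (adjoint A₂ x) = adjoint A₂ (adjoint A₁ x) := by
    intro x
    have h1 := congrArg ContinuousLinearMap.adjoint hcomm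
    rw [mul_def, mul_def, adjoint_comp, adjoint_comp] at h1
    simpa using (DFunLike.congr_fun h1 x).symm
  -- expand the goal into applied form
  simp only [sub_apply, one_apply_eq_self, smul_apply, comp_apply]
  -- main vectors
  set h : H := R (adjoint Φ (matCLM (ξ₁ • σ₁ + ξ₂ • σ₂) u)) with hhdef
  set w : EuclideanSpace ℂ (Fin n) := u - Complex.I • Φ h with hwdef
  set p₁ : H := adjoint A₁ h - l₁ • h with hp₁
  set p₂ : H := adjoint A₂ h - l₂ • h with hp₂
  set v₁ : H := adjoint Φ (matCLM σ₁ w) - p₁ with hv₁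
  set v₂ : H := adjoint Φ (matCLM σ₂ w) - p₂ with hv₂
  -- hu expanded
  have hu' : l₁ • matCLM σ₂ u - l₂ • matCLM σ₁ u + matCLM γ u = 0 := by
    rw [← matCLM_apply_smul, ← matCLM_apply_smul, ← matCLM_apply_sub, ← matCLM_apply_add]
    exact hu
  have hu'' : l₁ • adjoint Φ (matCLM σ₂ u) - l₂ • adjoint Φ (matCLM σ₁ u)
      + adjoint Φ (matCLM γ u) = 0 := by
    have := congrArg (adjoint Φ) hu'
    simpa [map_add, map_sub, map_smul] using this
  -- resolvent identities
  have hE1 : ξ₁ • A₁ h + ξ₂ • A₂ h - (ξ₁ * l₁ + ξ₂ * l₂) • h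
      = ξ₁ • adjoint Φ (matCLM σ₁ u) + ξ₂ • adjoint Φ (matCLM σ₂ u) := by
    have h1 := DFunLike.congr_fun hR₁ (adjoint Φ (matCLM (ξ₁ • σ₁ + ξ₂ • σ₂) u))
    simp only [comp_apply, one_apply_eq_self, sub_apply, add_apply, smul_apply, ← hhdef] at h1
    rw [h1, matCLM_apply_add, matCLM_apply_smul, matCLM_apply_smul, map_add, map_smul, map_smul]
  have hE2 : ∀ x : H, R (ξ₁ • A₁ x + ξ₂ • A₂ x - (ξ₁ * l₁ + ξ₂ * l₂) • x) = x := by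
    intro x
    have h1 := DFunLike.congr_fun hR₂ x
    simpa only [comp_apply, one_apply_eq_self, sub_apply, add_apply, smul_apply] using h1
  -- Step A : ξ₁ • v₁ + ξ₂ • v₂ = 0
  have hA : ξ₁ • v₁ + ξ₂ • v₂ = 0 := by
    rw [hv₁, hv₂, hp₁, hp₂, hwdef]
    simp only [map_sub, map_smul]
    linear_combination (norm := module) (-1 : ℂ) • hE1 + ξ₁ • hcol₁' h + ξ₂ • hcol₂' h
  -- middle lemma
  have hMG : matCLM σ₁ (Φ p₂) - matCLM σ₂ (Φ p₁)
      = l₁ • matCLM σ₂ (Φ h) - l₂ • matCLM σ₁ (Φ h) + matCLM γ (Φ h) := by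
    rw [hp₁, hp₂]
    simp only [map_sub, map_smul]
    linear_combination (norm := module) hinp h
  -- adjoint Φ applied to hinp h
  have hinph : adjoint Φ (matCLM σ₁ (Φ (adjoint A₂ h)))
      - adjoint Φ (matCLM σ₂ (Φ (adjoint A₁ h))) = adjoint Φ (matCLM γ (Φ h)) := by
    have := congrArg (adjoint Φ) (hinp h)
    simpa [map_sub] using this
  -- Step B : A₁ v₂ - A₂ v₁ = l₁ • v₂ - l₂ • v₁
  have hB : A₁ v₂ - A₂ v₁ = l₁ • v₂ - l₂ • v₁ := by
    rw [hv₁, hv₂, hp₁, hp₂, hwdef]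
    simp only [map_sub, map_smul]
    linear_combination (norm := module) (-1 : ℂ) • hinadj u + Complex.I • hinadj (Φ h)
      + (-1 : ℂ) • hcol₁' (adjoint A₂ h) + hcol₂' (adjoint A₁ h)
      + (-1 : ℂ) • hcommadj h + (-Complex.I) • hinph
      + l₂ • hcol₁' h + (-l₁) • hcol₂' h + (-1 : ℂ) • hu''
  -- Step C : v₁ = 0 and v₂ = 0
  have hA1im : ξ₁ • A₁ v₁ + ξ₂ • A₁ v₂ = 0 := by
    have := congrArg A₁ hA
    simpa [map_add, map_smul] using this
  have hA2im : ξ₁ • A₂ v₁ + ξ₂ • A₂ v₂ = 0 := by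
    have := congrArg A₂ hA
    simpa [map_add, map_smul] using this
  have hv₁0 : v₁ = 0 := by
    have hTv₁ : ξ₁ • A₁ v₁ + ξ₂ • A₂ v₁ - (ξ₁ * l₁ + ξ₂ * l₂) • v₁ = 0 := by
      linear_combination (norm := module) hA1im + (-ξ₂) • hB + (-l₁) • hA
    have := hE2 v₁
    rw [hTv₁, map_zero] at this
    exact this.symm
  have hv₂0 : v₂ = 0 := by
    have hTv₂ : ξ₁ • A₁ v₂ + ξ₂ • A₂ v₂ - (ξ₁ * l₁ + ξ₂ * l₂) • v₂ = 0 := by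
      linear_combination (norm := module) hA2im + ξ₁ • hB + (-l₂) • hA
    have := hE2 v₂
    rw [hTv₂, map_zero] at this
    exact this.symm
  -- Finale
  have e1 : adjoint Φ (matCLM σ₁ w) = p₁ := by
    have := hv₁0
    rw [hv₁] at this
    exact sub_eq_zero.mp this
  have e2 : adjoint Φ (matCLM σ₂ w) = p₂ := by
    have := hv₂0
    rw [hv₂] at this
    exact sub_eq_zero.mp this
  have F := hlinkp w
  rw [e1, e2] at F
  rw [matCLM_apply_add, matCLM_apply_sub, matCLM_apply_smul, matCLM_apply_smul]
  rw [hwdef] at F ⊢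
  simp only [map_sub, map_smul] at F ⊢
  linear_combination (norm := module) hu' + (-1 : ℂ) • F + Complex.I • hMG
end

section
/- Let (A₁, A₂; H, Φ, ℂⁿ; σ₁, σ₂, γ, γ̃) be a commutative two-operator vessel, let (λ₁, λ₂) ∈ ℂ², and let u ∈ ker(λ₁σ₂ − λ₂σ₁ + γ). Suppose (ξ₁, ξ₂) and (ξ₁′, ξ₂′) are two pairs of complex numbers such that both ξ₁A₁ + ξ₂A₂ − (ξ₁λ₁ + ξ₂λ₂)I and ξ₁′A₁ + ξ₂′A₂ − (ξ₁′λ₁ + ξ₂′λ₂)I are boundedly invertible. Then W(ξ₁, ξ₂, ξ₁λ₁ + ξ₂λ₂) u = W(ξ₁′, ξ₂′, ξ₁′λ₁ + ξ₂′λ₂) u, where W(ξ₁, ξ₂, z) = I − i Φ (ξ₁A₁ + ξ₂A₂ − zI)^{-1} Φ* (ξ₁σ₁ + ξ₂σ₂); that is, the joint characteristic function on the input fiber is independent of the choice of direction (ξ₁, ξ₂). -/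
open ContinuousLinearMap

set_option maxHeartbeats 1000000 in
/-- **The joint characteristic function of a commutative two-operator vessel is independent
of the direction.** For `u ∈ ker(λ₁σ₂ − λ₂σ₁ + γ)` and two directions `(ξ₁, ξ₂)`,
`(ξ₁', ξ₂')` for which `ξ₁A₁ + ξ₂A₂ − (ξ₁λ₁ + ξ₂λ₂)I` resp.
`ξ₁'A₁ + ξ₂'A₂ − (ξ₁'λ₁ + ξ₂'λ₂)I` are boundedly invertible (with inverses `R`, `R'`),
the values of `W(ξ₁, ξ₂, ξ₁λ₁ + ξ₂λ₂)` and `W(ξ₁', ξ₂', ξ₁'λ₁ + ξ₂'λ₂)` on `u` agree,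
where `W(ξ₁, ξ₂, z) = I − iΦ(ξ₁A₁ + ξ₂A₂ − zI)⁻¹Φ*(ξ₁σ₁ + ξ₂σ₂)`. -/
theorem vessel_JCF_independent_of_direction
    (n : ℕ)
    (H : Type*) [NormedAddCommGroup H] [InnerProductSpace ℂ H] [CompleteSpace H]
    (A₁ A₂ : H →L[ℂ] H) (hcomm : A₁ * A₂ = A₂ * A₁)
    (Φ : H →L[ℂ] EuclideanSpace ℂ (Fin n))
    (σ₁ σ₂ γ γ' : Matrix (Fin n) (Fin n) ℂ)
    (hσ₁ : σ₁.IsHermitian) (hσ₂ : σ₂.IsHermitian)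
    (hγ : γ.IsHermitian) (hγ' : γ'.IsHermitian)
    (hcol₁ : Complex.I⁻¹ • (A₁ - ContinuousLinearMap.adjoint A₁)
        = ContinuousLinearMap.adjoint Φ ∘L matCLM σ₁ ∘L Φ)
    (hcol₂ : Complex.I⁻¹ • (A₂ - ContinuousLinearMap.adjoint A₂)
        = ContinuousLinearMap.adjoint Φ ∘L matCLM σ₂ ∘L Φ)
    (hin : matCLM σ₁ ∘L Φ ∘L ContinuousLinearMap.adjoint A₂
          - matCLM σ₂ ∘L Φ ∘L ContinuousLinearMap.adjoint A₁ = matCLM γ ∘L Φ)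
    (hout : matCLM σ₁ ∘L Φ ∘L A₂ - matCLM σ₂ ∘L Φ ∘L A₁ = matCLM γ' ∘L Φ)
    (hlink : Complex.I • (matCLM σ₁ ∘L Φ ∘L ContinuousLinearMap.adjoint Φ ∘L matCLM σ₂
          - matCLM σ₂ ∘L Φ ∘L ContinuousLinearMap.adjoint Φ ∘L matCLM σ₁)
        = matCLM γ' - matCLM γ)
    (l₁ l₂ : ℂ) (u : EuclideanSpace ℂ (Fin n))
    (hu : matCLM (l₁ • σ₂ - l₂ • σ₁ + γ) u = 0)
    (ξ₁ ξ₂ ξ₁' ξ₂' : ℂ) (R R' : H →L[ℂ] H)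
    (hR₁ : ((ξ₁ • A₁ + ξ₂ • A₂) - (ξ₁ * l₁ + ξ₂ * l₂) • (1 : H →L[ℂ] H)) ∘L R = 1)
    (hR₂ : R ∘L ((ξ₁ • A₁ + ξ₂ • A₂) - (ξ₁ * l₁ + ξ₂ * l₂) • (1 : H →L[ℂ] H)) = 1)
    (hR'₁ : ((ξ₁' • A₁ + ξ₂' • A₂) - (ξ₁' * l₁ + ξ₂' * l₂) • (1 : H →L[ℂ] H)) ∘L R' = 1)
    (hR'₂ : R' ∘L ((ξ₁' • A₁ + ξ₂' • A₂) - (ξ₁' * l₁ + ξ₂' * l₂) • (1 : H →L[ℂ] H)) = 1) :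
    (1 - Complex.I •
        (Φ ∘L R ∘L ContinuousLinearMap.adjoint Φ ∘L matCLM (ξ₁ • σ₁ + ξ₂ • σ₂))) u
      = (1 - Complex.I •
          (Φ ∘L R' ∘L ContinuousLinearMap.adjoint Φ ∘L matCLM (ξ₁' • σ₁ + ξ₂' • σ₂))) u := by
  classical
  -- matCLM is additive and ℂ-linear
  have matCLM_add : ∀ P Q : Matrix (Fin n) (Fin n) ℂ, matCLM (P + Q) = matCLM P + matCLM Q :=
    fun P Q => map_add _ P Q
  have matCLM_sub : ∀ P Q : Matrix (Fin n) (Fin n) ℂ, matCLM (P - Q) = matCLM P - matCLM Q :=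
    fun P Q => map_sub (Matrix.toEuclideanCLM (𝕜 := ℂ)) P Q
  have matCLM_smul : ∀ (c : ℂ) (P : Matrix (Fin n) (Fin n) ℂ), matCLM (c • P) = c • matCLM P :=
    fun c P => map_smul (Matrix.toEuclideanCLM (𝕜 := ℂ)) c P
  have hadjσ : ∀ σ : Matrix (Fin n) (Fin n) ℂ, σ.IsHermitian →
      ContinuousLinearMap.adjoint (matCLM σ) = matCLM σ := by
    intro σ hσ
    rw [← ContinuousLinearMap.star_eq_adjoint]
    show star (Matrix.toEuclideanCLM (𝕜 := ℂ) σ) = matCLM σ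
    rw [← map_star]
    unfold matCLM
    rw [Matrix.star_eq_conjTranspose, hσ.eq]
  -- adjoint of the input vessel condition
  have hadj := congrArg ContinuousLinearMap.adjoint hin
  simp only [map_sub, ContinuousLinearMap.adjoint_comp,
    ContinuousLinearMap.adjoint_adjoint, hadjσ σ₁ hσ₁, hadjσ σ₂ hσ₂, hadjσ γ hγ] at hadj
  set x := ContinuousLinearMap.adjoint Φ (matCLM σ₁ u) with hxdef
  set y := ContinuousLinearMap.adjoint Φ (matCLM σ₂ u) with hydef
  have hγu : matCLM γ u = l₂ • matCLM σ₁ u - l₁ • matCLM σ₂ u := by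
    have h3 := hu
    rw [matCLM_add, matCLM_sub, matCLM_smul, matCLM_smul] at h3
    simp only [ContinuousLinearMap.add_apply, ContinuousLinearMap.sub_apply,
      ContinuousLinearMap.smul_apply] at h3
    linear_combination (norm := module) h3
  -- the key relation
  have key : A₂ x - l₂ • x = A₁ y - l₁ • y := by
    have h1 := DFunLike.congr_fun hadj u
    simp only [ContinuousLinearMap.sub_apply, ContinuousLinearMap.comp_apply] at h1
    rw [hγu, map_sub, map_smul, map_smul] at h1
    rw [← hxdef, ← hydef] at h1
    linear_combination (norm := module) h1
  -- pass to the ring language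
  set B : H →L[ℂ] H := (ξ₁ • A₁ + ξ₂ • A₂) - (ξ₁ * l₁ + ξ₂ * l₂) • (1 : H →L[ℂ] H) with hBdef
  set B' : H →L[ℂ] H := (ξ₁' • A₁ + ξ₂' • A₂) - (ξ₁' * l₁ + ξ₂' * l₂) • (1 : H →L[ℂ] H)
    with hB'def
  rw [← ContinuousLinearMap.mul_def] at hR₁ hR₂ hR'₁ hR'₂
  have hcomB : B * B' = B' * B := by
    rw [hBdef, hB'def]
    simp only [sub_mul, mul_sub, add_mul, mul_add, smul_mul_assoc, mul_smul_comm,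
      mul_one, one_mul, smul_smul, hcomm]
    module
  have hBR' : B * R' = R' * B := by
    calc B * R' = (R' * B') * (B * R') := by rw [hR'₂, one_mul]
      _ = R' * ((B' * B) * R') := by rw [mul_assoc, ← mul_assoc B' B R']
      _ = R' * ((B * B') * R') := by rw [hcomB]
      _ = R' * (B * (B' * R')) := by rw [mul_assoc]
      _ = R' * B := by rw [hR'₁, mul_one]
  have hinj : Function.Injective B := by
    intro v w h
    have hv := DFunLike.congr_fun hR₂ v
    have hw := DFunLike.congr_fun hR₂ w
    simp only [ContinuousLinearMap.mul_apply, ContinuousLinearMap.one_apply] at hv hw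
    rw [← hv, ← hw, h]
  have hinj' : Function.Injective B' := by
    intro v w h
    have hv := DFunLike.congr_fun hR'₂ v
    have hw := DFunLike.congr_fun hR'₂ w
    simp only [ContinuousLinearMap.mul_apply, ContinuousLinearMap.one_apply] at hv hw
    rw [← hv, ← hw, h]
  have hA2x : A₂ x = A₁ y - l₁ • y + l₂ • x := by
    rw [sub_eq_iff_eq_add] at key; exact key
  -- the central identity
  have hmain : R (ξ₁ • x + ξ₂ • y) = R' (ξ₁' • x + ξ₂' • y) := by
    apply hinj
    have e1 : B (R (ξ₁ • x + ξ₂ • y)) = ξ₁ • x + ξ₂ • y := by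
      have := DFunLike.congr_fun hR₁ (ξ₁ • x + ξ₂ • y)
      simpa only [ContinuousLinearMap.mul_apply, ContinuousLinearMap.one_apply] using this
    have e2 : B (R' (ξ₁' • x + ξ₂' • y)) = R' (B (ξ₁' • x + ξ₂' • y)) := by
      have := DFunLike.congr_fun hBR' (ξ₁' • x + ξ₂' • y)
      simpa only [ContinuousLinearMap.mul_apply] using this
    rw [e1, e2]
    apply hinj'
    have e3 : B' (R' (B (ξ₁' • x + ξ₂' • y))) = B (ξ₁' • x + ξ₂' • y) := by
      have := DFunLike.congr_fun hR'₁ (B (ξ₁' • x + ξ₂' • y))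
      simpa only [ContinuousLinearMap.mul_apply, ContinuousLinearMap.one_apply] using this
    rw [e3]
    rw [hBdef, hB'def]
    simp only [ContinuousLinearMap.sub_apply, ContinuousLinearMap.add_apply,
      ContinuousLinearMap.smul_apply, ContinuousLinearMap.one_apply, map_add, map_smul]
    rw [hA2x]
    module
  -- conclude
  have hs : ContinuousLinearMap.adjoint Φ (matCLM (ξ₁ • σ₁ + ξ₂ • σ₂) u) = ξ₁ • x + ξ₂ • y := by
    rw [matCLM_add, matCLM_smul, matCLM_smul]
    simp only [ContinuousLinearMap.add_apply, ContinuousLinearMap.smul_apply]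
    rw [map_add, map_smul, map_smul, hxdef, hydef]
  have hs' : ContinuousLinearMap.adjoint Φ (matCLM (ξ₁' • σ₁ + ξ₂' • σ₂) u)
      = ξ₁' • x + ξ₂' • y := by
    rw [matCLM_add, matCLM_smul, matCLM_smul]
    simp only [ContinuousLinearMap.add_apply, ContinuousLinearMap.smul_apply]
    rw [map_add, map_smul, map_smul, hxdef, hydef]
  simp only [ContinuousLinearMap.sub_apply, ContinuousLinearMap.smul_apply,
    ContinuousLinearMap.one_apply, ContinuousLinearMap.comp_apply]
  rw [hs, hs', hmain]
end

section
/- Let d ∈ ℕ, let a, b ∈ ℕ with 0 ≤ a < d and 0 ≤ b < d, and let c₀, …, c_d be real numbers with c₀ ≠ 0. Define f(x) = Σ_{p=0}^{d} c_p x^p and the two-variable function Q(x, y) = (Σ_{q=0}^{d−1} c_q Σ_{t=1}^{d−q} x^{q+t−1} y^{d−t}) / (f(x) f(y)), which is analytic in a neighborhood of (0, 0) since c₀ ≠ 0. Then lim_{(x,y)→(0,0)} Σ_{j=0}^{d−1−a} (c_{d−j−a−1} / (b!·j!)) · ∂^{j+b} Q / ∂x^j ∂y^b (x, y) = δ_{b,a},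 where δ_{b,a} is the Kronecker delta (equal to 1 if a = b and 0 otherwise). -/
open Filter Topology



noncomputable def pd1 (g : ℂ × ℂ → ℂ) : ℂ × ℂ → ℂ := fun p => fderiv ℂ g p (1, 0)
noncomputable def pd2 (g : ℂ × ℂ → ℂ) : ℂ × ℂ → ℂ := fun p => fderiv ℂ g p (0, 1)

lemma pd1_analytic {g : ℂ × ℂ → ℂ} {U : Set (ℂ × ℂ)} (hU : IsOpen U)
    (hg : AnalyticOnNhd ℂ g U) : AnalyticOnNhd ℂ (pd1 g) U :=
  (ContinuousLinearMap.apply ℂ ℂ ((1:ℂ), (0:ℂ))).comp_analyticOnNhd (hg.fderiv_of_isOpen hU)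

lemma pd2_analytic {g : ℂ × ℂ → ℂ} {U : Set (ℂ × ℂ)} (hU : IsOpen U)
    (hg : AnalyticOnNhd ℂ g U) : AnalyticOnNhd ℂ (pd2 g) U :=
  (ContinuousLinearMap.apply ℂ ℂ ((0:ℂ), (1:ℂ))).comp_analyticOnNhd (hg.fderiv_of_isOpen hU)

lemma pd1_eq {g : ℂ × ℂ → ℂ} {p : ℂ × ℂ} (hg : DifferentiableAt ℂ g p) :
    deriv (fun x => g (x, p.2)) p.1 = pd1 g p := by
  have h1 : HasDerivAt (fun x : ℂ => (x, p.2)) ((1:ℂ), (0:ℂ)) p.1 :=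
    (hasDerivAt_id p.1).prodMk (hasDerivAt_const p.1 p.2)
  have h2 : HasFDerivAt g (fderiv ℂ g p) ((fun x : ℂ => (x, p.2)) p.1) := by
    simpa using hg.hasFDerivAt
  exact (h2.comp_hasDerivAt p.1 h1).deriv

lemma pd2_eq {g : ℂ × ℂ → ℂ} {p : ℂ × ℂ} (hg : DifferentiableAt ℂ g p) :
    deriv (fun y => g (p.1, y)) p.2 = pd2 g p := by
  have h1 : HasDerivAt (fun y : ℂ => (p.1, y)) ((0:ℂ), (1:ℂ)) p.2 :=
    (hasDerivAt_const p.2 p.1).prodMk (hasDerivAt_id p.2)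
  have h2 : HasFDerivAt g (fderiv ℂ g p) ((fun y : ℂ => (p.1, y)) p.2) := by
    simpa using hg.hasFDerivAt
  exact (h2.comp_hasDerivAt p.2 h1).deriv

lemma pd1_iter_analytic {g : ℂ × ℂ → ℂ} {U : Set (ℂ × ℂ)} (hU : IsOpen U)
    (hg : AnalyticOnNhd ℂ g U) (j : ℕ) : AnalyticOnNhd ℂ (pd1^[j] g) U := by
  induction j with
  | zero => exact hg
  | succ j ih => rw [Function.iterate_succ_apply']; exact pd1_analytic hU ih

lemma pd2_iter_analytic {g : ℂ × ℂ → ℂ} {U : Set (ℂ × ℂ)} (hU : IsOpen U)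
    (hg : AnalyticOnNhd ℂ g U) (j : ℕ) : AnalyticOnNhd ℂ (pd2^[j] g) U := by
  induction j with
  | zero => exact hg
  | succ j ih => rw [Function.iterate_succ_apply']; exact pd2_analytic hU ih

lemma itD_fst_eq {g : ℂ × ℂ → ℂ} {U : Set (ℂ × ℂ)} (hU : IsOpen U)
    (hg : AnalyticOnNhd ℂ g U) (j : ℕ) :
    ∀ p ∈ U, iteratedDeriv j (fun x => g (x, p.2)) p.1 = pd1^[j] g p := by
  induction j with
  | zero => intro p hp; simp
  | succ j ih =>
    intro p hp
    rw [iteratedDeriv_succ]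
    have hV : IsOpen {x : ℂ | (x, p.2) ∈ U} :=
      hU.preimage (continuous_id.prodMk continuous_const)
    have heq : iteratedDeriv j (fun x => g (x, p.2)) =ᶠ[𝓝 p.1]
        fun x => pd1^[j] g (x, p.2) := by
      filter_upwards [hV.mem_nhds (by exact hp)] with x hx
      exact ih (x, p.2) hx
    rw [heq.deriv_eq, Function.iterate_succ_apply']
    exact pd1_eq ((pd1_iter_analytic hU hg j p hp).differentiableAt)

lemma itD_snd_eq {g : ℂ × ℂ → ℂ} {U : Set (ℂ × ℂ)} (hU : IsOpen U)
    (hg : AnalyticOnNhd ℂ g U) (j : ℕ) :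
    ∀ p ∈ U, iteratedDeriv j (fun y => g (p.1, y)) p.2 = pd2^[j] g p := by
  induction j with
  | zero => intro p hp; simp
  | succ j ih =>
    intro p hp
    rw [iteratedDeriv_succ]
    have hV : IsOpen {y : ℂ | (p.1, y) ∈ U} :=
      hU.preimage (continuous_const.prodMk continuous_id)
    have heq : iteratedDeriv j (fun y => g (p.1, y)) =ᶠ[𝓝 p.2]
        fun y => pd2^[j] g (p.1, y) := by
      filter_upwards [hV.mem_nhds (by exact hp)] with y hy
      exact ih (p.1, y) hy
    rw [heq.deriv_eq, Function.iterate_succ_apply']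
    exact pd2_eq ((pd2_iter_analytic hU hg j p hp).differentiableAt)


lemma itD_an {f : ℂ → ℂ} {s : Set ℂ} (hf : AnalyticOnNhd ℂ f s) (n : ℕ) :
    AnalyticOnNhd ℂ (iteratedDeriv n f) s := by
  rw [iteratedDeriv_eq_iterate]; exact hf.iterated_deriv n

lemma itD_sum {ι : Type*} (F : Finset ι) (g : ι → ℂ → ℂ) {s : Set ℂ} (hs : IsOpen s)
    (hg : ∀ i ∈ F, AnalyticOnNhd ℂ (g i) s) (n : ℕ) :
    ∀ x ∈ s, iteratedDeriv n (fun y => ∑ i ∈ F, g i y) x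
      = ∑ i ∈ F, iteratedDeriv n (g i) x := by
  induction n with
  | zero => intro x _; simp
  | succ n ih =>
    intro x hx
    rw [iteratedDeriv_succ]
    have heq : iteratedDeriv n (fun y => ∑ i ∈ F, g i y) =ᶠ[𝓝 x]
        fun y => ∑ i ∈ F, iteratedDeriv n (g i) y := by
      filter_upwards [hs.mem_nhds hx] with y hy; exact ih y hy
    rw [heq.deriv_eq,
      deriv_fun_sum (fun i hi => ((itD_an (hg i hi) n) x hx).differentiableAt)]
    exact Finset.sum_congr rfl fun i hi => by rw [← iteratedDeriv_succ]

lemma itD_cmul {g : ℂ → ℂ} {s : Set ℂ} (hs : IsOpen s) (hg : AnalyticOnNhd ℂ g s)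
    (c : ℂ) (n : ℕ) :
    ∀ x ∈ s, iteratedDeriv n (fun y => c * g y) x = c * iteratedDeriv n g x := by
  induction n with
  | zero => intro x _; simp
  | succ n ih =>
    intro x hx
    rw [iteratedDeriv_succ]
    have heq : iteratedDeriv n (fun y => c * g y) =ᶠ[𝓝 x]
        fun y => c * iteratedDeriv n g y := by
      filter_upwards [hs.mem_nhds hx] with y hy; exact ih y hy
    rw [heq.deriv_eq, deriv_const_mul c ((itD_an hg n x hx).differentiableAt),
      ← iteratedDeriv_succ]

lemma itD_sub {f g : ℂ → ℂ} {s : Set ℂ} (hs : IsOpen s) (hf : AnalyticOnNhd ℂ f s)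
    (hg : AnalyticOnNhd ℂ g s) (n : ℕ) :
    ∀ x ∈ s, iteratedDeriv n (fun y => f y - g y) x
      = iteratedDeriv n f x - iteratedDeriv n g x := by
  induction n with
  | zero => intro x _; simp
  | succ n ih =>
    intro x hx
    rw [iteratedDeriv_succ]
    have heq : iteratedDeriv n (fun y => f y - g y) =ᶠ[𝓝 x]
        fun y => iteratedDeriv n f y - iteratedDeriv n g y := by
      filter_upwards [hs.mem_nhds hx] with y hy; exact ih y hy
    rw [heq.deriv_eq, deriv_fun_sub ((itD_an hf n x hx).differentiableAt)
      ((itD_an hg n x hx).differentiableAt), ← iteratedDeriv_succ, ← iteratedDeriv_succ]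

private lemma pascal_sum (n : ℕ) (A B : ℕ → ℂ) :
    ∑ k ∈ Finset.range (n + 2), ((n+1).choose k : ℂ) * A k * B (n + 1 - k)
      = (∑ k ∈ Finset.range (n + 1), (n.choose k : ℂ) * A (k+1) * B (n - k))
        + ∑ k ∈ Finset.range (n + 1), (n.choose k : ℂ) * A k * B (n + 1 - k) := by
  rw [Finset.sum_range_succ' _ (n + 1)]
  have h1 : ∀ i ∈ Finset.range (n + 1),
      (((n+1).choose (i+1) : ℂ)) * A (i+1) * B (n + 1 - (i+1))
      = (n.choose i : ℂ) * A (i+1) * B (n - i)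
        + (n.choose (i+1) : ℂ) * A (i+1) * B (n - i) := by
    intro i _
    have : n + 1 - (i + 1) = n - i := by omega
    rw [this, Nat.choose_succ_succ]
    push_cast
    ring
  rw [Finset.sum_congr rfl h1, Finset.sum_add_distrib]
  have h2 : (∑ i ∈ Finset.range (n + 1), (n.choose (i+1) : ℂ) * A (i+1) * B (n - i))
      + ((n+1).choose 0 : ℂ) * A 0 * B (n + 1 - 0)
      = ∑ k ∈ Finset.range (n + 1), (n.choose k : ℂ) * A k * B (n + 1 - k) := by
    rw [Finset.sum_range_succ'
      (fun k => (n.choose k : ℂ) * A k * B (n + 1 - k)) n]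
    rw [Finset.sum_range_succ]
    simp only [Nat.choose_succ_self, Nat.cast_zero, zero_mul, add_zero,
      Nat.choose_zero_right, Nat.cast_one, one_mul, Nat.sub_zero,
      Nat.succ_sub_succ_eq_sub]
  rw [add_assoc, h2]

lemma itD_mul {f g : ℂ → ℂ} {s : Set ℂ} (hs : IsOpen s) (hf : AnalyticOnNhd ℂ f s)
    (hg : AnalyticOnNhd ℂ g s) (n : ℕ) :
    ∀ x ∈ s, iteratedDeriv n (fun y => f y * g y) x
      = ∑ k ∈ Finset.range (n + 1),
          (n.choose k : ℂ) * iteratedDeriv k f x * iteratedDeriv (n - k) g x := by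
  induction n with
  | zero => intro x _; simp
  | succ n ih =>
    intro x hx
    rw [iteratedDeriv_succ]
    have heq : iteratedDeriv n (fun y => f y * g y) =ᶠ[𝓝 x]
        fun y => ∑ k ∈ Finset.range (n + 1),
          (n.choose k : ℂ) * iteratedDeriv k f y * iteratedDeriv (n - k) g y := by
      filter_upwards [hs.mem_nhds hx] with y hy; exact ih y hy
    have hdf : ∀ m, DifferentiableAt ℂ (iteratedDeriv m f) x :=
      fun m => (itD_an hf m x hx).differentiableAt
    have hdg : ∀ m, DifferentiableAt ℂ (iteratedDeriv m g) x :=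
      fun m => (itD_an hg m x hx).differentiableAt
    rw [heq.deriv_eq, deriv_fun_sum (A := fun k y => (n.choose k : ℂ) * iteratedDeriv k f y *
      iteratedDeriv (n - k) g y) (fun k _ =>
      (((hdf k).const_mul _).mul (hdg (n - k))))]
    have h3 : ∀ k ∈ Finset.range (n + 1),
        deriv (fun y => (n.choose k : ℂ) * iteratedDeriv k f y * iteratedDeriv (n-k) g y) x
        = (n.choose k : ℂ) * iteratedDeriv (k+1) f x * iteratedDeriv (n-k) g x
          + (n.choose k : ℂ) * iteratedDeriv k f x * iteratedDeriv (n+1-k) g x := by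
      intro k hk
      rw [deriv_fun_mul ((hdf k).const_mul _) (hdg (n-k)),
        deriv_const_mul _ (hdf k)]
      have : n + 1 - k = (n - k) + 1 := by
        simp only [Finset.mem_range] at hk; omega
      rw [this, ← iteratedDeriv_succ, ← iteratedDeriv_succ]
      try ring
    rw [Finset.sum_congr rfl h3, Finset.sum_add_distrib, pascal_sum n
      (fun k => iteratedDeriv k f x) (fun k => iteratedDeriv k g x)]

lemma itD_pow_zero (m k : ℕ) :
    iteratedDeriv k (fun x : ℂ => x ^ m) 0 = if m = k then (k.factorial : ℂ) else 0 := by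
  rw [iteratedDeriv_eq_iterate, iter_deriv_pow]
  rcases eq_or_ne m k with rfl | hmk
  · have : ∀ i ∈ Finset.range m, ((m : ℂ) - i) = ((m - i : ℕ) : ℂ) := by
      intro i hi
      have : i ≤ m := le_of_lt (Finset.mem_range.mp hi)
      push_cast [Nat.cast_sub this]
      ring
    rw [Finset.prod_congr rfl this, ← Nat.cast_prod,
      ← Nat.descFactorial_eq_prod_range, Nat.descFactorial_self]
    simp
  · rw [if_neg hmk]
    rcases lt_or_gt_of_ne hmk with h | h
    · -- m < k : the product contains the factor (m - m) = 0
      have : ((m : ℂ) - (m : ℕ)) = 0 := by simp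
      rw [Finset.prod_eq_zero (Finset.mem_range.mpr h) this, zero_mul]
    · -- m > k : 0 ^ (m - k) = 0
      rw [zero_pow (by omega), mul_zero]

noncomputable def fF (c : ℕ → ℝ) (d : ℕ) : ℂ → ℂ :=
  fun z => ∑ i ∈ Finset.range (d + 1), (c i : ℂ) * z ^ i

noncomputable def NF (c : ℕ → ℝ) (d : ℕ) : ℂ → ℂ → ℂ :=
  fun x y => ∑ q ∈ Finset.range d, (c q : ℂ) *
      ∑ t ∈ Finset.Icc 1 (d - q), x ^ (q + t - 1) * y ^ (d - t)

noncomputable def QF (c : ℕ → ℝ) (d : ℕ) : ℂ × ℂ → ℂ :=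
  fun p => NF c d p.1 p.2 / (fF c d p.1 * fF c d p.2)

def sF (c : ℕ → ℝ) (d : ℕ) : Set ℂ := {z | fF c d z ≠ 0}

def UF (c : ℕ → ℝ) (d : ℕ) : Set (ℂ × ℂ) := {p | fF c d p.1 ≠ 0 ∧ fF c d p.2 ≠ 0}

variable {c : ℕ → ℝ} {d : ℕ}

lemma fF_zero : fF c d 0 = (c 0 : ℂ) := by
  unfold fF
  rw [Finset.sum_eq_single 0]
  · simp
  · intro i _ hi; simp [zero_pow hi]
  · intro h; exact absurd (Finset.mem_range.mpr (Nat.succ_pos d)) h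

lemma fF_an (s : Set ℂ) : AnalyticOnNhd ℂ (fF c d) s := by
  intro z _
  exact Finset.analyticAt_fun_sum _ (fun i _ => analyticAt_const.mul (analyticAt_id.pow i))

lemma fF_cont : Continuous (fF c d) := by
  unfold fF; fun_prop

lemma sF_open : IsOpen (sF c d) := by
  have : sF c d = fF c d ⁻¹' ({0}ᶜ) := rfl
  rw [this]
  exact fF_cont.isOpen_preimage _ isOpen_compl_singleton

lemma UF_open : IsOpen (UF c d) := by
  have : UF c d = (fun p : ℂ × ℂ => p.1) ⁻¹' (sF c d) ∩ (fun p : ℂ × ℂ => p.2) ⁻¹' (sF c d) :=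
    rfl
  rw [this]
  exact (sF_open.preimage continuous_fst).inter (sF_open.preimage continuous_snd)

lemma zero_mem_sF (hc₀ : c 0 ≠ 0) : (0 : ℂ) ∈ sF c d := by
  show fF c d 0 ≠ 0
  rw [fF_zero]
  exact_mod_cast Complex.ofReal_ne_zero.mpr hc₀

lemma zero_mem_UF (hc₀ : c 0 ≠ 0) : ((0 : ℂ), (0 : ℂ)) ∈ UF c d :=
  ⟨zero_mem_sF hc₀, zero_mem_sF hc₀⟩

lemma NFx_an (y : ℂ) (s : Set ℂ) : AnalyticOnNhd ℂ (fun x => NF c d x y) s := by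
  intro z _
  refine Finset.analyticAt_fun_sum _ (fun q _ => analyticAt_const.mul ?_)
  exact Finset.analyticAt_fun_sum _ (fun t _ => (analyticAt_id.pow _).mul analyticAt_const)

lemma QF_an : AnalyticOnNhd ℂ (QF c d) (UF c d) := by
  intro p hp
  apply AnalyticAt.div
  · refine Finset.analyticAt_fun_sum _ (fun q _ => analyticAt_const.mul ?_)
    refine Finset.analyticAt_fun_sum _ (fun t _ => AnalyticAt.mul ?_ ?_)
    · exact (((ContinuousLinearMap.fst ℂ ℂ ℂ).analyticAt p).pow _)
    · exact (((ContinuousLinearMap.snd ℂ ℂ ℂ).analyticAt p).pow _)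
  · exact ((fF_an Set.univ p.1 trivial).comp
      ((ContinuousLinearMap.fst ℂ ℂ ℂ).analyticAt p)).mul
      ((fF_an Set.univ p.2 trivial).comp ((ContinuousLinearMap.snd ℂ ℂ ℂ).analyticAt p))
  · exact mul_ne_zero hp.1 hp.2

lemma value_lemma (d a b : ℕ) (ha : a < d) (hb : b < d) (c : ℕ → ℝ) (hc₀ : c 0 ≠ 0) :
    ∑ j ∈ Finset.range (d - a),
      ((c (d - j - a - 1) : ℂ) / ((b.factorial : ℂ) * (j.factorial : ℂ))) *
        iteratedDeriv b (fun y => pd1^[j] (QF c d) ((0:ℂ), y)) 0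
      = if b = a then 1 else 0 := by
  have hs0 : (0:ℂ) ∈ sF c d := zero_mem_sF hc₀
  set m := d - a - 1 with hm
  have hdam : d - a = m + 1 := by omega
  have hpow : ∀ i : ℕ, AnalyticOnNhd ℂ (fun z : ℂ => z ^ i) Set.univ :=
    fun i z _ => analyticAt_id.pow i
  have hpow_s : ∀ i : ℕ, AnalyticOnNhd ℂ (fun z : ℂ => z ^ i) (sF c d) :=
    fun i z _ => analyticAt_id.pow i
  have hGan : ∀ j : ℕ, AnalyticOnNhd ℂ (fun y => pd1^[j] (QF c d) ((0:ℂ), y)) (sF c d) := by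
    intro j y hy
    exact (pd1_iter_analytic UF_open QF_an j ((0:ℂ), y)
      (show ((0:ℂ), y) ∈ UF c d from ⟨hs0, hy⟩)).comp
      (analyticAt_const.prod analyticAt_id)
  have hGval : ∀ (j : ℕ), ∀ y ∈ sF c d, pd1^[j] (QF c d) ((0:ℂ), y)
      = iteratedDeriv j (fun x => NF c d x y / (fF c d x * fF c d y)) 0 :=
    fun j y hy => (itD_fst_eq UF_open QF_an j ((0:ℂ), y)
      (show ((0:ℂ), y) ∈ UF c d from ⟨hs0, hy⟩)).symm
  -- derivatives of f at 0
  have hfk : ∀ k, k ≤ d → iteratedDeriv k (fF c d) 0 = (k.factorial : ℂ) * (c k : ℂ) := by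
    intro k hk
    have h1 := itD_sum (Finset.range (d+1)) (fun i => fun z => (c i : ℂ) * z ^ i) isOpen_univ
        (fun i _ => fun z _ => analyticAt_const.mul (analyticAt_id.pow i)) k 0 trivial
    have h2 : ∀ i ∈ Finset.range (d+1), iteratedDeriv k (fun z : ℂ => (c i : ℂ) * z ^ i) 0
        = (c i : ℂ) * (if i = k then (k.factorial : ℂ) else 0) := by
      intro i _
      rw [itD_cmul isOpen_univ (hpow i) ((c i : ℂ)) k 0 trivial, itD_pow_zero]
    calc iteratedDeriv k (fF c d) 0
        = ∑ i ∈ Finset.range (d+1), (c i : ℂ) * (if i = k then (k.factorial:ℂ) else 0) := by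
          rw [show fF c d = (fun z => ∑ i ∈ Finset.range (d+1), (c i : ℂ) * z ^ i) from rfl, h1]
          exact Finset.sum_congr rfl h2
      _ = (k.factorial : ℂ) * (c k : ℂ) := by
          simp only [mul_ite, mul_zero]
          rw [Finset.sum_ite_eq' (Finset.range (d+1)) k]
          rw [if_pos (Finset.mem_range.mpr (by omega))]
          ring
  -- the key identity
  have hkey : ∀ y ∈ sF c d,
      (∑ j ∈ Finset.range (m+1), ((c (m-j) : ℂ) / (j.factorial : ℂ)) *
        pd1^[j] (QF c d) ((0:ℂ), y))
      = y ^ a - y ^ d *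
          ((∑ q ∈ Finset.Ico (m+1) (d+1), (c q : ℂ) * y ^ (a+q-d)) / fF c d y) := by
    intro y hy
    have hfy : fF c d y ≠ 0 := hy
    have hgan : AnalyticOnNhd ℂ (fun x => NF c d x y / (fF c d x * fF c d y)) (sF c d) := by
      intro x hx
      exact AnalyticAt.div (NFx_an y _ x hx) ((fF_an _ x hx).mul analyticAt_const)
        (mul_ne_zero hx hfy)
    have hL := itD_mul sF_open (fF_an (c:=c) (d:=d) (sF c d)) hgan m 0 hs0
    have hEq : iteratedDeriv m
          (fun x => fF c d x * (NF c d x y / (fF c d x * fF c d y))) 0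
        = iteratedDeriv m (fun x => NF c d x y / fF c d y) 0 := by
      apply Filter.EventuallyEq.iteratedDeriv_eq
      filter_upwards [sF_open.mem_nhds hs0] with x hx
      have hfx : fF c d x ≠ 0 := hx
      field_simp
      try ring
    have hNan : AnalyticOnNhd ℂ (fun x => NF c d x y) Set.univ := NFx_an y _
    -- computation of the RHS polynomial derivative
    have hRHS : iteratedDeriv m (fun x => NF c d x y / fF c d y) 0
        = (fF c d y)⁻¹ * ((m.factorial : ℂ) *
            ∑ q ∈ Finset.range (m+1), (c q : ℂ) * y ^ (a+q)) := by
      have h0 : (fun x => NF c d x y / fF c d y) = fun x => (fF c d y)⁻¹ * NF c d x y := by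
        funext x; rw [div_eq_mul_inv, mul_comm]
      rw [h0, itD_cmul isOpen_univ hNan _ m 0 trivial]
      congr 1
      have h1 := itD_sum (Finset.range d)
          (fun q => fun x : ℂ => (c q : ℂ) * ∑ t ∈ Finset.Icc 1 (d-q), x ^ (q+t-1) * y ^ (d-t))
          isOpen_univ (fun q _ => fun x _ => analyticAt_const.mul
            (Finset.analyticAt_fun_sum _ fun t _ => (analyticAt_id.pow _).mul analyticAt_const))
          m 0 trivial
      rw [show (fun x => NF c d x y) = (fun x => ∑ q ∈ Finset.range d,
        (c q : ℂ) * ∑ t ∈ Finset.Icc 1 (d-q), x ^ (q+t-1) * y ^ (d-t)) from rfl, h1]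
      have hsum_an : ∀ q : ℕ, AnalyticOnNhd ℂ
          (fun x : ℂ => ∑ t ∈ Finset.Icc 1 (d-q), x ^ (q+t-1) * y ^ (d-t)) Set.univ :=
        fun q x _ => Finset.analyticAt_fun_sum _ fun t _ =>
          (analyticAt_id.pow _).mul analyticAt_const
      have h2 : ∀ q ∈ Finset.range d,
          iteratedDeriv m (fun x : ℂ => (c q : ℂ) *
              ∑ t ∈ Finset.Icc 1 (d-q), x ^ (q+t-1) * y ^ (d-t)) 0
          = (c q : ℂ) * ∑ t ∈ Finset.Icc 1 (d-q),
              y ^ (d-t) * (if q + t - 1 = m then (m.factorial:ℂ) else 0) := by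
        intro q _
        rw [itD_cmul isOpen_univ (hsum_an q) ((c q : ℂ)) m 0 trivial]
        congr 1
        rw [itD_sum (Finset.Icc 1 (d-q)) (fun t => fun x : ℂ => x ^ (q+t-1) * y ^ (d-t))
          isOpen_univ (fun t _ => fun x _ => (analyticAt_id.pow _).mul analyticAt_const)
          m 0 trivial]
        refine Finset.sum_congr rfl fun t _ => ?_
        have h3 : (fun x : ℂ => x ^ (q+t-1) * y ^ (d-t))
            = fun x => y ^ (d-t) * x ^ (q+t-1) := by funext x; ring
        rw [h3, itD_cmul isOpen_univ (hpow (q+t-1)) _ m 0 trivial, itD_pow_zero]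
      rw [Finset.sum_congr rfl h2]
      have hinner1 : ∀ q, q ≤ m →
          (∑ t ∈ Finset.Icc 1 (d - q),
            y ^ (d - t) * (if q + t - 1 = m then (m.factorial:ℂ) else 0))
          = (m.factorial:ℂ) * y ^ (a + q) := by
        intro q hq
        rw [Finset.sum_eq_single_of_mem (d - a - q)
          (Finset.mem_Icc.mpr ⟨by omega, by omega⟩)]
        · rw [if_pos (by omega), show d - (d - a - q) = a + q by omega, mul_comm]
        · intro t ht hne
          rw [Finset.mem_Icc] at ht
          rw [if_neg (by omega), mul_zero]
      have hinner2 : ∀ q, m < q →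
          (∑ t ∈ Finset.Icc 1 (d - q),
            y ^ (d - t) * (if q + t - 1 = m then (m.factorial:ℂ) else 0)) = 0 := by
        intro q hq
        refine Finset.sum_eq_zero fun t ht => ?_
        rw [Finset.mem_Icc] at ht
        rw [if_neg (by omega), mul_zero]
      rw [← Finset.sum_range_add_sum_Ico _ (show m+1 ≤ d by omega)]
      have hz : ∑ q ∈ Finset.Ico (m+1) d, (c q : ℂ) *
          (∑ t ∈ Finset.Icc 1 (d - q),
            y ^ (d - t) * (if q + t - 1 = m then (m.factorial:ℂ) else 0)) = 0 := by
        refine Finset.sum_eq_zero fun q hq => ?_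
        rw [Finset.mem_Ico] at hq
        rw [hinner2 q (by omega), mul_zero]
      rw [hz, add_zero, Finset.mul_sum]
      refine Finset.sum_congr rfl fun q hq => ?_
      rw [Finset.mem_range] at hq
      rw [hinner1 q (by omega)]
      ring
    -- combine Leibniz with the two computations
    have hcomb : ∑ k ∈ Finset.range (m+1), (m.choose k : ℂ) *
          iteratedDeriv k (fF c d) 0 *
          iteratedDeriv (m-k) (fun x => NF c d x y / (fF c d x * fF c d y)) 0
        = (fF c d y)⁻¹ * ((m.factorial : ℂ) *
            ∑ q ∈ Finset.range (m+1), (c q : ℂ) * y ^ (a+q)) := by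
      rw [← hL, hEq, hRHS]
    -- reflect the sum
    have hmm : (m.factorial : ℂ) * (∑ j ∈ Finset.range (m+1),
          ((c (m-j) : ℂ) / (j.factorial : ℂ)) * pd1^[j] (QF c d) ((0:ℂ), y))
        = ∑ k ∈ Finset.range (m+1), (m.choose k : ℂ) *
            iteratedDeriv k (fF c d) 0 *
            iteratedDeriv (m-k) (fun x => NF c d x y / (fF c d x * fF c d y)) 0 := by
      rw [← Finset.sum_range_reflect (fun k => (m.choose k : ℂ) *
        iteratedDeriv k (fF c d) 0 *
        iteratedDeriv (m-k) (fun x => NF c d x y / (fF c d x * fF c d y)) 0) (m+1)]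
      rw [Finset.mul_sum]
      refine Finset.sum_congr rfl fun j hj => ?_
      rw [Finset.mem_range] at hj
      have hjm : j ≤ m := by omega
      have e1 : m + 1 - 1 - j = m - j := by omega
      have e2 : m - (m - j) = j := by omega
      rw [e1, hfk (m-j) (by omega), e2, hGval j y hy]
      have hcf : ((m.choose (m-j) : ℂ) * ((m-j).factorial : ℂ)) * (j.factorial : ℂ)
          = (m.factorial : ℂ) := by
        have := Nat.choose_mul_factorial_mul_factorial (Nat.sub_le m j)
        rw [e2] at this
        exact_mod_cast congrArg (Nat.cast : ℕ → ℂ) this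
      have hjf : (j.factorial : ℂ) ≠ 0 := Nat.cast_ne_zero.mpr (Nat.factorial_ne_zero j)
      rw [← hcf]
      field_simp
      rw [show (fun x => NF c d x y / (fF c d y * fF c d x))
        = fun x => NF c d x y / (fF c d x * fF c d y) from by funext x; ring]
    -- deduce the value of the sum
    have hmf : (m.factorial : ℂ) ≠ 0 := Nat.cast_ne_zero.mpr (Nat.factorial_ne_zero m)
    have hS : (∑ j ∈ Finset.range (m+1),
          ((c (m-j) : ℂ) / (j.factorial : ℂ)) * pd1^[j] (QF c d) ((0:ℂ), y))
        = (fF c d y)⁻¹ * ∑ q ∈ Finset.range (m+1), (c q : ℂ) * y ^ (a+q) := by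
      apply mul_left_cancel₀ hmf
      rw [hmm, hcomb]
      ring
    -- the polynomial split
    have hPy : (∑ q ∈ Finset.range (m+1), (c q : ℂ) * y ^ (a+q))
        = y ^ a * fF c d y - y ^ d * ∑ q ∈ Finset.Ico (m+1) (d+1), (c q : ℂ) * y ^ (a+q-d) := by
      have e1 : y ^ a * fF c d y = ∑ q ∈ Finset.range (d+1), (c q : ℂ) * y ^ (a+q) := by
        rw [show fF c d = fun z => ∑ i ∈ Finset.range (d+1), (c i : ℂ) * z ^ i from rfl]
        rw [Finset.mul_sum]
        refine Finset.sum_congr rfl fun q _ => ?_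
        rw [pow_add]; ring
      have e2 : (∑ q ∈ Finset.range (d+1), (c q : ℂ) * y ^ (a+q))
          = (∑ q ∈ Finset.range (m+1), (c q : ℂ) * y ^ (a+q))
            + ∑ q ∈ Finset.Ico (m+1) (d+1), (c q : ℂ) * y ^ (a+q) :=
        (Finset.sum_range_add_sum_Ico _ (by omega)).symm
      have e3 : (∑ q ∈ Finset.Ico (m+1) (d+1), (c q : ℂ) * y ^ (a+q))
          = y ^ d * ∑ q ∈ Finset.Ico (m+1) (d+1), (c q : ℂ) * y ^ (a+q-d) := by
        rw [Finset.mul_sum]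
        refine Finset.sum_congr rfl fun q hq => ?_
        rw [Finset.mem_Ico] at hq
        have hyy : y ^ d * y ^ (a + q - d) = y ^ (a + q) := by
          rw [← pow_add]; congr 1; omega
        rw [← hyy]; ring
      rw [e1, e2, e3]; ring
    rw [hS, hPy]
    field_simp
    try ring
  -- final assembly
  rw [hdam]
  have hvan : AnalyticOnNhd ℂ
      (fun y => (∑ q ∈ Finset.Ico (m+1) (d+1), (c q : ℂ) * y ^ (a+q-d)) / fF c d y)
      (sF c d) := by
    intro y hy
    exact AnalyticAt.div
      (Finset.analyticAt_fun_sum _ fun q _ => analyticAt_const.mul (analyticAt_id.pow _))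
      (fF_an _ y hy) hy
  have hbf : (b.factorial : ℂ) ≠ 0 := Nat.cast_ne_zero.mpr (Nat.factorial_ne_zero b)
  have step1 : ∑ j ∈ Finset.range (m+1),
      ((c (d - j - a - 1) : ℂ) / ((b.factorial : ℂ) * (j.factorial : ℂ))) *
        iteratedDeriv b (fun y => pd1^[j] (QF c d) ((0:ℂ), y)) 0
      = ((b.factorial:ℂ))⁻¹ * ∑ j ∈ Finset.range (m+1),
          iteratedDeriv b (fun y => ((c (m-j) : ℂ) / (j.factorial : ℂ)) *
            pd1^[j] (QF c d) ((0:ℂ), y)) 0 := by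
    rw [Finset.mul_sum]
    refine Finset.sum_congr rfl fun j hj => ?_
    rw [itD_cmul sF_open (hGan j) _ b 0 hs0,
      show d - j - a - 1 = m - j by omega]
    field_simp
    try ring
  have step2 : ∑ j ∈ Finset.range (m+1),
        iteratedDeriv b (fun y => ((c (m-j) : ℂ) / (j.factorial : ℂ)) *
          pd1^[j] (QF c d) ((0:ℂ), y)) 0
      = iteratedDeriv b (fun y => ∑ j ∈ Finset.range (m+1),
          ((c (m-j) : ℂ) / (j.factorial : ℂ)) * pd1^[j] (QF c d) ((0:ℂ), y)) 0 :=
    (itD_sum (Finset.range (m+1)) (fun j => fun y => ((c (m-j) : ℂ) / (j.factorial : ℂ)) *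
      pd1^[j] (QF c d) ((0:ℂ), y)) sF_open
      (fun j _ => fun y hy => analyticAt_const.mul (hGan j y hy)) b 0 hs0).symm
  have step3 : iteratedDeriv b (fun y => ∑ j ∈ Finset.range (m+1),
        ((c (m-j) : ℂ) / (j.factorial : ℂ)) * pd1^[j] (QF c d) ((0:ℂ), y)) 0
      = iteratedDeriv b (fun y => y ^ a - y ^ d *
          ((∑ q ∈ Finset.Ico (m+1) (d+1), (c q : ℂ) * y ^ (a+q-d)) / fF c d y)) 0 := by
    apply Filter.EventuallyEq.iteratedDeriv_eq
    filter_upwards [sF_open.mem_nhds hs0] with y hy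
    exact hkey y hy
  have step4 : iteratedDeriv b (fun y => y ^ a - y ^ d *
        ((∑ q ∈ Finset.Ico (m+1) (d+1), (c q : ℂ) * y ^ (a+q-d)) / fF c d y)) 0
      = iteratedDeriv b (fun y : ℂ => y ^ a) 0
        - iteratedDeriv b (fun y => y ^ d *
          ((∑ q ∈ Finset.Ico (m+1) (d+1), (c q : ℂ) * y ^ (a+q-d)) / fF c d y)) 0 :=
    itD_sub sF_open (hpow_s a)
      (fun y hy => ((hpow_s d) y hy).mul (hvan y hy)) b 0 hs0
  have step6 : iteratedDeriv b (fun y => y ^ d *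
        ((∑ q ∈ Finset.Ico (m+1) (d+1), (c q : ℂ) * y ^ (a+q-d)) / fF c d y)) 0 = 0 := by
    rw [itD_mul sF_open (hpow_s d) hvan b 0 hs0]
    refine Finset.sum_eq_zero fun k hk => ?_
    rw [Finset.mem_range] at hk
    rw [itD_pow_zero, if_neg (by omega)]
    ring
  rw [step1, step2, step3, step4, step6, itD_pow_zero]
  rcases eq_or_ne b a with rfl | hba
  · rw [if_pos rfl, if_pos rfl]
    field_simp
    simp
  · rw [if_neg (fun h => hba h.symm), if_neg hba]
    ring

/-- **The limit lemma for mixed partial derivatives (Lemma `lemLimitZero` of the paper).**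
For `0 ≤ a, b < d` and real `c₀, …, c_d` with `c₀ ≠ 0`, set
`f(x) = Σ_{p=0}^{d} c_p x^p` and
`Q(x, y) = (Σ_{q=0}^{d−1} c_q Σ_{t=1}^{d−q} x^{q+t−1} y^{d−t}) / (f(x) f(y))`. Then
`lim_{(x,y)→(0,0)} Σ_{j=0}^{d−1−a} (c_{d−j−a−1} / (b!·j!)) ∂^{j+b}Q/∂x^j∂y^b (x,y) = δ_{b,a}`. -/
theorem limit_of_mixed_partials_kronecker_delta
    (d a b : ℕ) (ha : a < d) (hb : b < d)
    (c : ℕ → ℝ) (hc₀ : c 0 ≠ 0) :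
    Filter.Tendsto
      (fun xy : ℂ × ℂ =>
        ∑ j ∈ Finset.range (d - a),
          ((c (d - j - a - 1) : ℂ) / ((b.factorial : ℂ) * (j.factorial : ℂ))) *
            iteratedDeriv b
              (fun y => iteratedDeriv j
                (fun x =>
                  (∑ q ∈ Finset.range d, (c q : ℂ) *
                      ∑ t ∈ Finset.Icc 1 (d - q), x ^ (q + t - 1) * y ^ (d - t)) /
                    ((∑ i ∈ Finset.range (d + 1), (c i : ℂ) * x ^ i) *
                      (∑ i ∈ Finset.range (d + 1), (c i : ℂ) * y ^ i)))
                xy.1)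
              xy.2)
      (nhds (0, 0)) (nhds (if b = a then (1 : ℂ) else 0)) := by
  set Φ : ℂ × ℂ → ℂ := fun p =>
    ∑ j ∈ Finset.range (d - a),
      ((c (d - j - a - 1) : ℂ) / ((b.factorial : ℂ) * (j.factorial : ℂ))) *
        pd2^[b] (pd1^[j] (QF c d)) p with hΦ
  have h00 : ((0:ℂ), (0:ℂ)) ∈ UF c d := zero_mem_UF hc₀
  have heqU : ∀ p ∈ UF c d,
      (∑ j ∈ Finset.range (d - a),
        ((c (d - j - a - 1) : ℂ) / ((b.factorial : ℂ) * (j.factorial : ℂ))) *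
          iteratedDeriv b
            (fun y => iteratedDeriv j
              (fun x =>
                (∑ q ∈ Finset.range d, (c q : ℂ) *
                    ∑ t ∈ Finset.Icc 1 (d - q), x ^ (q + t - 1) * y ^ (d - t)) /
                  ((∑ i ∈ Finset.range (d + 1), (c i : ℂ) * x ^ i) *
                    (∑ i ∈ Finset.range (d + 1), (c i : ℂ) * y ^ i)))
              p.1)
            p.2) = Φ p := by
    intro p hp
    refine Finset.sum_congr rfl fun j _ => ?_
    congr 1
    have hV : IsOpen {y : ℂ | (p.1, y) ∈ UF c d} :=
      UF_open.preimage (continuous_const.prodMk continuous_id)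
    have h2 : (fun y => iteratedDeriv j
        (fun x =>
          (∑ q ∈ Finset.range d, (c q : ℂ) *
              ∑ t ∈ Finset.Icc 1 (d - q), x ^ (q + t - 1) * y ^ (d - t)) /
            ((∑ i ∈ Finset.range (d + 1), (c i : ℂ) * x ^ i) *
              (∑ i ∈ Finset.range (d + 1), (c i : ℂ) * y ^ i)))
        p.1) =ᶠ[𝓝 p.2] (fun y => pd1^[j] (QF c d) (p.1, y)) := by
      filter_upwards [hV.mem_nhds (by exact hp)] with y hy
      exact itD_fst_eq UF_open QF_an j (p.1, y) hy
    rw [Filter.EventuallyEq.iteratedDeriv_eq b h2,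
      itD_snd_eq UF_open (pd1_iter_analytic UF_open QF_an j) b p hp]
  have hΦan : AnalyticAt ℂ Φ ((0:ℂ), (0:ℂ)) := by
    refine Finset.analyticAt_fun_sum _ (fun j _ => analyticAt_const.mul ?_)
    exact pd2_iter_analytic UF_open (pd1_iter_analytic UF_open QF_an j) b _ h00
  have hev : (fun xy : ℂ × ℂ =>
      ∑ j ∈ Finset.range (d - a),
        ((c (d - j - a - 1) : ℂ) / ((b.factorial : ℂ) * (j.factorial : ℂ))) *
          iteratedDeriv b
            (fun y => iteratedDeriv j
              (fun x =>
                (∑ q ∈ Finset.range d, (c q : ℂ) *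
                    ∑ t ∈ Finset.Icc 1 (d - q), x ^ (q + t - 1) * y ^ (d - t)) /
                  ((∑ i ∈ Finset.range (d + 1), (c i : ℂ) * x ^ i) *
                    (∑ i ∈ Finset.range (d + 1), (c i : ℂ) * y ^ i)))
              xy.1)
            xy.2) =ᶠ[𝓝 ((0:ℂ), (0:ℂ))] Φ := by
    filter_upwards [UF_open.mem_nhds h00] with p hp
    exact heqU p hp
  have hval : Φ ((0:ℂ), (0:ℂ)) = if b = a then (1:ℂ) else 0 := by
    rw [hΦ]
    have h3 : ∀ j : ℕ, pd2^[b] (pd1^[j] (QF c d)) ((0:ℂ), (0:ℂ))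
        = iteratedDeriv b (fun y => pd1^[j] (QF c d) ((0:ℂ), y)) 0 :=
      fun j => (itD_snd_eq UF_open (pd1_iter_analytic UF_open QF_an j) b _ h00).symm
    simp only [h3]
    exact value_lemma d a b ha hb c hc₀
  rw [← hval]
  exact (hΦan.continuousAt.tendsto).congr' hev.symm
end
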